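/- arXiv:math/0607376 — 6 statements merged into one kernel-verified Lean document; each statement's English description precedes it below -/
import Mathlib

section
/- Let X be a uniformly discrete metric space (there exists r > 0 such that d(x,y) ≥ r whenever x ≠ y). If for every R > 0 and ε > 0 there exists a map ξ : X → ℓ¹(X) with each ξ_x of norm 1, finite propagation (sup{d(x,y) : ξ_x(y) ≠ 0} < ∞), and ‖ξ_x − ξ_y‖₁ ≤ ε whenever d(x,y) ≤ R, then for every ε > 0 there exists a map ξ : X → ℓ¹(X) with unit norms, finite propagation, and which is ε-Lipschitz as a map into ℓ¹(X). -/
/-- The ℓ¹ norm of a function on `X`. -/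
noncomputable def l1Norm {X : Type*} (f : X → ℝ) : ℝ := ∑' z, |f z|

lemma l1_summable {X : Type*} {f : X → ℝ} (h : l1Norm f = 1) :
    Summable fun z => |f z| := by
  by_contra hc
  rw [l1Norm, tsum_eq_zero_of_not_summable hc] at h
  norm_num at h

lemma l1_tri {X : Type*} {f g : X → ℝ} (hf : Summable fun z => |f z|)
    (hg : Summable fun z => |g z|) :
    l1Norm (fun z => f z - g z) ≤ l1Norm f + l1Norm g := by
  rw [l1Norm, l1Norm, l1Norm, ← Summable.tsum_add hf hg]
  exact Summable.tsum_le_tsum (fun z => (abs_sub _ _))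
    (hf.add hg |>.of_nonneg_of_le (fun z => abs_nonneg _) fun z => abs_sub _ _)
    (hf.add hg)

theorem stmt0 {X : Type*} [MetricSpace X]
    (hud : ∃ r > (0:ℝ), ∀ x y : X, x ≠ y → r ≤ dist x y)
    (hA : ∀ R > (0:ℝ), ∀ ε > (0:ℝ), ∃ ξ : X → X → ℝ,
      (∀ x, l1Norm (ξ x) = 1) ∧
      (∃ S : ℝ, ∀ x y, S < dist x y → ξ x y = 0) ∧
      (∀ x y, dist x y ≤ R → l1Norm (fun z => ξ x z - ξ y z) ≤ ε)) :
    ∀ ε > (0:ℝ), ∃ ξ : X → X → ℝ,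
      (∀ x, l1Norm (ξ x) = 1) ∧
      (∃ S : ℝ, ∀ x y, S < dist x y → ξ x y = 0) ∧
      (∀ x y, l1Norm (fun z => ξ x z - ξ y z) ≤ ε * dist x y) := by
  intro ε hε
  obtain ⟨r, hr, hrd⟩ := hud
  set R : ℝ := max (2 / ε) 1 with hR
  have hR0 : (0:ℝ) < R := lt_of_lt_of_le one_pos (le_max_right _ _)
  have hε'0 : (0:ℝ) < ε * r := mul_pos hε hr
  obtain ⟨ξ, h1, hS, hlip⟩ := hA R hR0 (ε * r) hε'0
  refine ⟨ξ, h1, hS, fun x y => ?_⟩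
  rcases eq_or_ne x y with rfl | hxy
  · simp [l1Norm]
  have hd : r ≤ dist x y := hrd x y hxy
  have hd0 : (0:ℝ) < dist x y := lt_of_lt_of_le hr hd
  rcases le_or_gt (dist x y) R with h | h
  · calc l1Norm (fun z => ξ x z - ξ y z) ≤ ε * r := hlip x y h
    _ ≤ ε * dist x y := by nlinarith
  · have h2 : 2 / ε ≤ dist x y := le_trans (le_max_left _ _) h.le
    have : l1Norm (fun z => ξ x z - ξ y z) ≤ 2 := by
      have := l1_tri (l1_summable (h1 x)) (l1_summable (h1 y))
      rw [h1 x, h1 y] at this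
      linarith
    calc l1Norm (fun z => ξ x z - ξ y z) ≤ 2 := this
    _ ≤ ε * dist x y := by
        rw [div_le_iff₀ hε] at h2; linarith
end

section
/- For 1 ≤ p ≤ q < ∞, the Mazur map M : ℓ^q_1(X) → ℓ^p_1(X), defined by (Mf)(x) = |f(x)|^{q/p − 1} f(x), maps the unit sphere of ℓ^q(X) to the unit sphere of ℓ^p(X) and is (q/p)-Lipschitz. -/
/-!
Write `r = q / p ≥ 1` and `φ a = |a| ^ (r - 1) * a`, so that `|φ a| ^ p = |a| ^ q`; this gives
the sphere statement. For the Lipschitz bound, `φ a - φ b = ∫_b^a r |x| ^ (r - 1)`. Young's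
inequality `r A |x| ^ (r - 1) ≤ A ^ r + (r - 1) |x| ^ r` and the Hermite–Hadamard bound for the
convex function `|x| ^ r` give, with `A` the `r`-th power mean `M_r(a, b)` of `|a|, |b|`,
`|φ a - φ b| ≤ r |a - b| M_r(a, b) ^ (r - 1) ≤ r |a - b| M_q(a, b) ^ (r - 1)`.
Since `1/q + (r - 1)/q = 1/p`, Hölder's inequality for the triple `(q, q/(r-1), p)` bounds
the `ℓ^p` norm of `φ ∘ f - φ ∘ g` by `r ‖f - g‖_q (∑ M_q(f, g)^q)^((r-1)/q)`, and the last
sum is `1` on the unit sphere.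
-/

open Real Set intervalIntegral

/-- The scalar Mazur map: `(M f) x = mazur (q / p) (f x)`. -/
noncomputable def mazur (r a : ℝ) : ℝ := |a| ^ (r - 1) * a

lemma abs_mazur {r : ℝ} (hr : r ≠ 0) (a : ℝ) : |mazur r a| = |a| ^ r := by
  rw [mazur, abs_mul, abs_of_nonneg (rpow_nonneg (abs_nonneg a) _),
    ← rpow_add_one' (abs_nonneg a) (by simpa using hr), sub_add_cancel]

lemma hasDerivAt_mazur {r : ℝ} (hr : 1 < r) (x : ℝ) :
    HasDerivAt (mazur r) (r * |x| ^ (r - 1)) x := by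
  have hne : ∀ y ≠ 0, HasDerivAt (mazur r) (r * |y| ^ (r - 1)) y := by
    intro y hy
    have hy' : |y| ≠ 0 := abs_ne_zero.2 hy
    refine (((hasDerivAt_abs hy).rpow_const (p := r - 1) (Or.inl hy')).mul
      (hasDerivAt_id' y)).congr_deriv ?_
    rw [rpow_sub_one hy']
    field_simp
    linear_combination (r - 1) * sign_mul_self y
  have hcont : Continuous fun y : ℝ ↦ |y| ^ (r - 1) :=
    continuous_abs.rpow_const fun _ ↦ Or.inr (by linarith)
  rcases eq_or_ne x 0 with rfl | hx
  · exact hasDerivAt_of_hasDerivAt_of_ne hne (hcont.mul continuous_id).continuousAt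
      (continuous_const.mul hcont).continuousAt
  · exact hne x hx

lemma monotone_mazur {r : ℝ} (hr : 1 < r) : Monotone (mazur r) :=
  monotone_of_deriv_nonneg (fun x ↦ (hasDerivAt_mazur hr x).differentiableAt)
    fun x ↦ (hasDerivAt_mazur hr x).deriv ▸ by have := zero_lt_one.trans hr; positivity

lemma mul_rpow_sub_one_le {r A y : ℝ} (hr : 1 < r) (hA : 0 ≤ A) (hy : 0 ≤ y) :
    r * (A * y ^ (r - 1)) ≤ A ^ r + (r - 1) * y ^ r := by
  have hyoung := young_inequality_of_nonneg hA (rpow_nonneg hy (r - 1))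
    (HolderConjugate.conjExponent hr)
  have hr1 : r - 1 ≠ 0 := by linarith
  rw [conjExponent, ← rpow_mul hy, mul_div_cancel₀ r hr1] at hyoung
  calc r * (A * y ^ (r - 1)) ≤ r * (A ^ r / r + y ^ r / (r / (r - 1))) := by gcongr
    _ = A ^ r + (r - 1) * y ^ r := by field_simp

lemma convexOn_abs_rpow {r : ℝ} (hr : 1 ≤ r) : ConvexOn ℝ univ fun x : ℝ ↦ |x| ^ r := by
  refine ⟨convex_univ, fun x _ y _ s t hs ht hst ↦ ?_⟩
  have htri : |s • x + t • y| ≤ s • |x| + t • |y| := by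
    simpa [abs_mul, abs_of_nonneg hs, abs_of_nonneg ht] using abs_add_le (s * x) (t * y)
  calc |s • x + t • y| ^ r ≤ (s • |x| + t • |y|) ^ r := by gcongr
    _ ≤ s • |x| ^ r + t • |y| ^ r :=
      (convexOn_rpow hr).2 (abs_nonneg x) (abs_nonneg y) hs ht hst

lemma ConvexOn.integral_le_mul_add_div_two {f : ℝ → ℝ} {a b : ℝ} (hba : b ≤ a)
    (hf : ConvexOn ℝ (Icc b a) f) (hfi : IntervalIntegrable f MeasureTheory.volume b a) :
    ∫ x in b..a, f x ≤ (a - b) * ((f a + f b) / 2) := by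
  rcases hba.eq_or_lt with rfl | hba
  · simp
  set k := (f a - f b) / (a - b)
  have hchord : ∀ x ∈ Icc b a, f x ≤ f b + k * (x - b) := by
    intro x hx
    have hab : 0 < a - b := sub_pos.2 hba
    have hx_eq : ((a - x) / (a - b)) • b + ((x - b) / (a - b)) • a = x := by
      simp only [smul_eq_mul]; field_simp; ring
    have := hf.2 (left_mem_Icc.2 hba.le) (right_mem_Icc.2 hba.le)
      (div_nonneg (sub_nonneg.2 hx.2) hab.le) (div_nonneg (sub_nonneg.2 hx.1) hab.le)
      (by field_simp; ring)
    rw [hx_eq] at this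
    refine this.trans_eq ?_
    simp only [smul_eq_mul, k]; field_simp; ring
  calc ∫ x in b..a, f x ≤ ∫ x in b..a, f b + k * (x - b) :=
        integral_mono_on hba.le hfi (Continuous.intervalIntegrable (by fun_prop) _ _) hchord
    _ = (a - b) * ((f a + f b) / 2) := by
        rw [integral_add intervalIntegrable_const (Continuous.intervalIntegrable (by fun_prop) _ _),
          integral_const_mul, integral_sub intervalIntegrable_id intervalIntegrable_const,
          integral_id, integral_const, integral_const]
        simp only [k, smul_eq_mul]
        field_simp
        ring

lemma mazur_sub_mul_le {r a b A : ℝ} (hr : 1 < r) (hba : b ≤ a) (hA : 0 ≤ A) :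
    (mazur r a - mazur r b) * A ≤ (a - b) * (A ^ r + (r - 1) * ((|a| ^ r + |b| ^ r) / 2)) := by
  have hcont : ∀ s : ℝ, 0 ≤ s → Continuous fun x : ℝ ↦ |x| ^ s :=
    fun s hs ↦ continuous_abs.rpow_const (p := s) fun _ ↦ Or.inr hs
  have hcont_r := hcont r (by linarith)
  have hcont_r_sub_one := hcont (r - 1) (by linarith)
  have hftc : ∫ x in b..a, r * |x| ^ (r - 1) = mazur r a - mazur r b :=
    integral_eq_sub_of_hasDerivAt (fun x _ ↦ hasDerivAt_mazur hr x)
      (Continuous.intervalIntegrable (by fun_prop) _ _)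
  have hconv : ∫ x in b..a, |x| ^ r ≤ (a - b) * ((|a| ^ r + |b| ^ r) / 2) :=
    ((convexOn_abs_rpow hr.le).subset (subset_univ _) (convex_Icc b a)).integral_le_mul_add_div_two
      hba (hcont_r.intervalIntegrable _ _)
  calc (mazur r a - mazur r b) * A = ∫ x in b..a, r * (A * |x| ^ (r - 1)) := by
        rw [← hftc, ← integral_mul_const]; congr 1; ext x; ring
    _ ≤ ∫ x in b..a, A ^ r + (r - 1) * |x| ^ r :=
        integral_mono_on hba (Continuous.intervalIntegrable (by fun_prop) _ _)
          (Continuous.intervalIntegrable (by fun_prop) _ _)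
          fun x _ ↦ mul_rpow_sub_one_le hr hA (abs_nonneg x)
    _ = (a - b) * A ^ r + (r - 1) * ∫ x in b..a, |x| ^ r := by
        rw [integral_add intervalIntegrable_const ((hcont_r.intervalIntegrable _ _).const_mul _),
          integral_const, integral_const_mul, smul_eq_mul]
    _ ≤ (a - b) * A ^ r + (r - 1) * ((a - b) * ((|a| ^ r + |b| ^ r) / 2)) := by
        gcongr
    _ = (a - b) * (A ^ r + (r - 1) * ((|a| ^ r + |b| ^ r) / 2)) := by ring

lemma mazur_sub_le {r a b : ℝ} (hr : 1 < r) (hba : b ≤ a) :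
    mazur r a - mazur r b ≤ r * (a - b) * ((|a| ^ r + |b| ^ r) / 2) ^ ((r - 1) / r) := by
  have hr0 : r ≠ 0 := by positivity
  have ha := rpow_nonneg (abs_nonneg a) r
  have hb := rpow_nonneg (abs_nonneg b) r
  rcases (add_nonneg ha hb).eq_or_lt with h0 | hpos
  · have ha0 : a = 0 := abs_eq_zero.1 ((rpow_eq_zero (abs_nonneg a) hr0).1 (by linarith))
    have hb0 : b = 0 := abs_eq_zero.1 ((rpow_eq_zero (abs_nonneg b) hr0).1 (by linarith))
    subst ha0 hb0
    simp [mazur]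
  set h := (|a| ^ r + |b| ^ r) / 2
  replace hpos : 0 < h := half_pos hpos
  set A := h ^ r⁻¹
  have hApos : 0 < A := rpow_pos_of_pos hpos _
  have hAr : A ^ r = h := rpow_inv_rpow hpos.le hr0
  have hkey : (mazur r a - mazur r b) * A ≤ (a - b) * (h + (r - 1) * h) := by
    simpa only [hAr] using mazur_sub_mul_le hr hba hApos.le
  rw [show (r - 1) / r = 1 - r⁻¹ by field_simp, rpow_sub hpos, rpow_one, mul_div_assoc',
    le_div_iff₀ hApos]
  exact hkey.trans_eq (by ring)

lemma abs_mazur_sub_le {r : ℝ} (hr : 1 < r) (a b : ℝ) :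
    |mazur r a - mazur r b| ≤ r * |a - b| * ((|a| ^ r + |b| ^ r) / 2) ^ ((r - 1) / r) := by
  wlog hba : b ≤ a generalizing a b
  · rw [abs_sub_comm, abs_sub_comm a, add_comm]
    exact this b a (le_of_not_ge hba)
  rw [abs_of_nonneg (sub_nonneg.2 (monotone_mazur hr hba)), abs_of_nonneg (sub_nonneg.2 hba)]
  exact mazur_sub_le hr hba

lemma rpow_add_rpow_div_two_rpow_le {x y r s e : ℝ} (hx : 0 ≤ x) (hy : 0 ≤ y) (hr : 0 < r)
    (hrs : r ≤ s) (he : 0 ≤ e) :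
    ((x ^ r + y ^ r) / 2) ^ (e / r) ≤ ((x ^ s + y ^ s) / 2) ^ (e / s) := by
  have hs : 0 < s := hr.trans_le hrs
  have hjensen : ((x ^ r + y ^ r) / 2) ^ (s / r) ≤ (x ^ s + y ^ s) / 2 := by
    have := (convexOn_rpow ((one_le_div hr).2 hrs)).2 (rpow_nonneg hx r) (rpow_nonneg hy r)
      (by norm_num : (0 : ℝ) ≤ 1 / 2) (by norm_num : (0 : ℝ) ≤ 1 / 2) (by norm_num)
    simp only [smul_eq_mul] at this
    rw [← rpow_mul hx, ← rpow_mul hy, mul_div_cancel₀ s hr.ne'] at this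
    calc ((x ^ r + y ^ r) / 2) ^ (s / r) = (1 / 2 * x ^ r + 1 / 2 * y ^ r) ^ (s / r) := by ring_nf
      _ ≤ 1 / 2 * x ^ s + 1 / 2 * y ^ s := this
      _ = (x ^ s + y ^ s) / 2 := by ring
  calc ((x ^ r + y ^ r) / 2) ^ (e / r) = (((x ^ r + y ^ r) / 2) ^ (s / r)) ^ (e / s) := by
        rw [← rpow_mul (by positivity)]; field_simp
    _ ≤ ((x ^ s + y ^ s) / 2) ^ (e / s) := by gcongr

lemma abs_mazur_sub_le_mul {r q : ℝ} (hr : 1 < r) (hrq : r ≤ q) (a b : ℝ) :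
    |mazur r a - mazur r b| ≤ |a - b| * (r * ((|a| ^ q + |b| ^ q) / 2) ^ ((r - 1) / q)) := by
  refine (abs_mazur_sub_le hr a b).trans ?_
  rw [mul_left_comm, ← mul_assoc]
  gcongr
  exact rpow_add_rpow_div_two_rpow_le (abs_nonneg a) (abs_nonneg b) (by linarith) hrq (by linarith)

lemma summable_of_tsum_ne_zero {X M : Type*} [AddCommMonoid M] [TopologicalSpace M] {f : X → M}
    (h : ∑' x, f x ≠ 0) : Summable f :=
  not_imp_comm.1 tsum_eq_zero_of_not_summable h

lemma Lr_le_Lp_mul_Lq_tsum_of_abs_le_mul {X : Type*} {p q r : ℝ} (hpqr : p.HolderTriple q r)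
    {u F G : X → ℝ} (hF : ∀ x, 0 ≤ F x) (hG : ∀ x, 0 ≤ G x)
    (hF_sum : Summable fun x ↦ F x ^ p) (hG_sum : Summable fun x ↦ G x ^ q)
    (hu : ∀ x, |u x| ≤ F x * G x) :
    (∑' x, |u x| ^ r) ^ (1 / r) ≤
      (∑' x, F x ^ p) ^ (1 / p) * (∑' x, G x ^ q) ^ (1 / q) := by
  have hpoint : ∀ x, |u x| ^ r ≤ (F x * G x) ^ r := fun x ↦
    rpow_le_rpow (abs_nonneg _) (hu x) hpqr.nonneg'
  have hFG := summable_Lr_of_Lp_Lq_of_nonneg hpqr hF hG hF_sum hG_sum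
  calc (∑' x, |u x| ^ r) ^ (1 / r) ≤ (∑' x, (F x * G x) ^ r) ^ (1 / r) :=
        rpow_le_rpow (tsum_nonneg fun x ↦ by positivity)
          ((hFG.of_nonneg_of_le (fun x ↦ by positivity) hpoint).tsum_le_tsum hpoint hFG)
          hpqr.one_div_nonneg'
    _ ≤ (∑' x, F x ^ p) ^ (1 / p) * (∑' x, G x ^ q) ^ (1 / q) :=
        Lr_le_Lp_mul_Lq_tsum_of_nonneg hpqr hF hG hF_sum hG_sum

theorem tsum_abs_mazur_sub_rpow_le {X : Type*} {p q : ℝ} (hp : 1 ≤ p) (hpq : p < q)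
    {f g : X → ℝ} (hf : ∑' x, |f x| ^ q = 1) (hg : ∑' x, |g x| ^ q = 1) :
    (∑' x, |mazur (q / p) (f x) - mazur (q / p) (g x)| ^ p) ^ (1 / p)
      ≤ q / p * (∑' x, |f x - g x| ^ q) ^ (1 / q) := by
  have hp0 : 0 < p := by linarith
  have hq0 : 0 < q := by linarith
  set r := q / p
  have hr : 1 < r := (one_lt_div hp0).2 hpq
  set s := q / (r - 1)
  have hs : 0 < s := div_pos hq0 (by linarith)
  have htriple : q.HolderTriple s p := ⟨by simp only [r, s]; field_simp; ring, hq0, hs⟩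
  have hfs := summable_of_tsum_ne_zero (hf ▸ one_ne_zero)
  have hgs := summable_of_tsum_ne_zero (hg ▸ one_ne_zero)
  set H := fun x ↦ (|f x| ^ q + |g x| ^ q) / 2
  set G := fun x ↦ r * H x ^ ((r - 1) / q)
  have hG_rpow : ∀ x, G x ^ s = r ^ s * H x := fun x ↦ by
    rw [mul_rpow (by positivity) (by positivity), ← rpow_mul (by positivity),
      show (r - 1) / q * s = 1 by simp only [s]; field_simp; exact div_self (by linarith),
      rpow_one]
  have hG_summable : Summable fun x ↦ G x ^ s := by
    simp_rw [hG_rpow]; exact ((hfs.add hgs).div_const 2).mul_left _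
  have hG_tsum : ∑' x, G x ^ s = r ^ s := by
    rw [tsum_congr hG_rpow, tsum_mul_left, tsum_div_const, hfs.tsum_add hgs, hf, hg]; norm_num
  have hF_summable : Summable fun x ↦ |f x - g x| ^ q :=
    (summable_Lp_add_of_nonneg (le_trans hp hpq.le) (fun x ↦ abs_nonneg (f x))
      (fun x ↦ abs_nonneg (g x)) hfs hgs).of_nonneg_of_le (fun x ↦ by positivity)
      fun x ↦ rpow_le_rpow (abs_nonneg _) (abs_sub _ _) hq0.le
  calc (∑' x, |mazur r (f x) - mazur r (g x)| ^ p) ^ (1 / p)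
      ≤ (∑' x, |f x - g x| ^ q) ^ (1 / q) * (∑' x, G x ^ s) ^ (1 / s) :=
        Lr_le_Lp_mul_Lq_tsum_of_abs_le_mul htriple (fun x ↦ abs_nonneg _)
          (fun x ↦ by positivity) hF_summable hG_summable
          fun x ↦ abs_mazur_sub_le_mul hr (div_le_self hq0.le hp) _ _
    _ = r * (∑' x, |f x - g x| ^ q) ^ (1 / q) := by
        rw [hG_tsum, one_div s, rpow_rpow_inv (by positivity) hs.ne', mul_comm]

lemma tsum_abs_mazur_rpow {X : Type*} {p q : ℝ} (hp : 0 < p) (hq : q ≠ 0) (f : X → ℝ) :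
    ∑' x, |mazur (q / p) (f x)| ^ p = ∑' x, |f x| ^ q := by
  simp_rw [abs_mazur (div_ne_zero hq hp.ne'), ← rpow_mul (abs_nonneg _),
    div_mul_cancel₀ q hp.ne']

/-- the Mazur map `(Mf)(x) = |f x|^{q/p-1} f x` maps the unit sphere of
`ℓ^q(X)` to the unit sphere of `ℓ^p(X)` and is `(q/p)`-Lipschitz, for `1 ≤ p ≤ q`. -/
theorem stmt5 {X : Type*} (p q : ℝ) (hp : 1 ≤ p) (hpq : p ≤ q)
    (f g : X → ℝ) (hf : ∑' x, |f x| ^ q = 1) (hg : ∑' x, |g x| ^ q = 1) :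
    (∑' x, abs (|f x| ^ (q/p - 1) * f x) ^ p = 1) ∧
    (∑' x, abs (|f x| ^ (q/p - 1) * f x - |g x| ^ (q/p - 1) * g x) ^ p) ^ (1/p)
      ≤ (q / p) * (∑' x, |f x - g x| ^ q) ^ (1/q) := by
  have hp0 : 0 < p := by linarith
  refine ⟨(tsum_abs_mazur_rpow hp0 (hp0.trans_le hpq).ne' f).trans hf, ?_⟩
  rcases hpq.eq_or_lt with rfl | hpq
  · simp [div_self hp0.ne']
  · exact tsum_abs_mazur_sub_rpow_le hp hpq hf hg
end

section
/- Let X be a metric space of bounded geometry and 𝔘 a cover of X with finite multiplicity m(𝔘), finite mesh S(𝔘), and positive Lebesgue number L(𝔘). Then for every 1 ≤ p < ∞ there exists a map ξ : X → ℓ^p(X) with ‖ξ_x‖_p = 1 for all x, with propagation S(ξ) ≤ S(𝔘), and which is 2(2 m(𝔘)²)^{1/p} / L(𝔘)-Lipschitz. -/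
/-!
Put `ψ_U(x) = min (d(x, X ∖ U), L)`. It is 1-Lipschitz, vanishes off `U`, and equals `L` on a
member containing the `L`-ball around `x`; hence `‖ψ(x)‖_p ≥ L`, and since at most `2m` members
meet `{x, y}`, `‖ψ(x) - ψ(y)‖_p ≤ (2m)^{1/p} d(x, y)`. Normalizing, `φ(x) = ψ(x) / ‖ψ(x)‖_p`
satisfies `‖φ(x) - φ(y)‖_p ≤ 2 ‖ψ(x) - ψ(y)‖_p / L`. Finally `c ↦ (z ↦ ‖(c_U χ_U(z))_U‖_p)`
preserves the norm of `c` and is 1-Lipschitz from `ℓ^p(𝔘)` to `ℓ^p(X)`: the reverse Minkowski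
inequality in `U` for each `z`, followed by summation over `z`, uses only `‖χ_U‖_p ≤ 1`.
-/

noncomputable def pNorm {X : Type*} (p : ℝ) (f : X → ℝ) : ℝ := (∑' z, |f z| ^ p) ^ (1/p)

open Real Finset

section pNorm

variable {α : Type*} {p : ℝ} {f g : α → ℝ}

lemma pNorm_nonneg (p : ℝ) (f : α → ℝ) : 0 ≤ pNorm p f :=
  rpow_nonneg (tsum_nonneg fun _ => rpow_nonneg (abs_nonneg _) p) _

lemma pNorm_zero (hp : p ≠ 0) : pNorm p (0 : α → ℝ) = 0 := by
  simp [pNorm, zero_rpow hp, zero_rpow (inv_ne_zero hp)]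

lemma pNorm_eq_sum (hp : p ≠ 0) {s : Finset α} (hs : f.support ⊆ s) :
    pNorm p f = (∑ a ∈ s, |f a| ^ p) ^ (1/p) := by
  rw [pNorm, tsum_eq_sum fun a ha => ?_]
  rw [Function.notMem_support.1 fun h => ha (hs h), abs_zero, zero_rpow hp]

lemma pNorm_rpow_eq_sum (hp : p ≠ 0) {s : Finset α} (hs : f.support ⊆ s) :
    pNorm p f ^ p = ∑ a ∈ s, |f a| ^ p := by
  rw [pNorm_eq_sum hp hs, ← rpow_mul (sum_nonneg fun _ _ => rpow_nonneg (abs_nonneg _) p),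
    one_div_mul_cancel hp, rpow_one]

lemma pNorm_const_mul (hp : 0 < p) (c : ℝ) (f : α → ℝ) :
    pNorm p (fun a => c * f a) = |c| * pNorm p f := by
  simp_rw [pNorm, abs_mul, mul_rpow (abs_nonneg c) (abs_nonneg _), tsum_mul_left]
  rw [mul_rpow (rpow_nonneg (abs_nonneg c) p)
      (tsum_nonneg fun _ => rpow_nonneg (abs_nonneg _) p),
    ← rpow_mul (abs_nonneg c), mul_one_div_cancel hp.ne', rpow_one]

lemma pNorm_sub_comm (p : ℝ) (f g : α → ℝ) : pNorm p (f - g) = pNorm p (g - f) := by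
  simp only [pNorm, Pi.sub_apply, abs_sub_comm]

lemma pNorm_add_le (hp : 1 ≤ p) (hf : f.support.Finite) (hg : g.support.Finite) :
    pNorm p (f + g) ≤ pNorm p f + pNorm p g := by
  classical
  have hp₀ : p ≠ 0 := by positivity
  set s := hf.toFinset ∪ hg.toFinset
  have hfs : f.support ⊆ s := by simp [s]
  have hgs : g.support ⊆ s := by simp [s]
  rw [pNorm_eq_sum (f := f + g) hp₀ ((Function.support_add f g).trans (Set.union_subset hfs hgs)),
    pNorm_eq_sum hp₀ hfs, pNorm_eq_sum hp₀ hgs]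
  exact Lp_add_le s f g hp

lemma abs_pNorm_sub_pNorm_le (hp : 1 ≤ p) (hf : f.support.Finite) (hg : g.support.Finite) :
    |pNorm p f - pNorm p g| ≤ pNorm p (f - g) := by
  have hfg : (f - g).support.Finite := (hf.union hg).subset (Function.support_sub f g)
  have key : ∀ u v : α → ℝ, u.support.Finite → v.support.Finite → (u - v).support.Finite →
      pNorm p u - pNorm p v ≤ pNorm p (u - v) := fun u v hu hv huv => by
    have := pNorm_add_le hp huv hv
    rw [sub_add_cancel] at this
    linarith
  refine abs_sub_le_iff.2 ⟨key f g hf hg hfg, ?_⟩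
  rw [pNorm_sub_comm]
  exact key g f hg hf (by rwa [← neg_sub, Function.support_neg])

lemma pNorm_le_pNorm (hp : 0 < p) (hg : g.support.Finite) (h : ∀ a, |f a| ≤ |g a|) :
    pNorm p f ≤ pNorm p g := by
  have hfg : f.support ⊆ hg.toFinset := fun a ha => by
    rw [Set.Finite.coe_toFinset, Function.mem_support, ← abs_pos]
    exact (abs_pos.2 ha).trans_le (h a)
  rw [pNorm_eq_sum hp.ne' hfg, pNorm_eq_sum hp.ne' hg.coe_toFinset.superset]
  exact rpow_le_rpow (sum_nonneg fun _ _ => rpow_nonneg (abs_nonneg _) p)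
    (sum_le_sum fun a _ => rpow_le_rpow (abs_nonneg _) (h a) hp.le) (by positivity)

lemma abs_le_pNorm (hp : 0 < p) (hf : f.support.Finite) (a : α) : |f a| ≤ pNorm p f := by
  classical
  have hs : f.support ⊆ ↑(insert a hf.toFinset) := by simp
  rw [pNorm_eq_sum hp.ne' hs]
  calc |f a| = (|f a| ^ p) ^ (1/p) := by
        rw [← rpow_mul (abs_nonneg _), mul_one_div_cancel hp.ne', rpow_one]
    _ ≤ (∑ b ∈ insert a hf.toFinset, |f b| ^ p) ^ (1/p) := by
        gcongr
        exact single_le_sum (f := fun b => |f b| ^ p) (fun b _ => rpow_nonneg (abs_nonneg _) p)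
          (mem_insert_self a _)

lemma pNorm_pos (hp : 0 < p) (hf : f.support.Finite) {a : α} (ha : f a ≠ 0) : 0 < pNorm p f :=
  (abs_pos.2 ha).trans_le (abs_le_pNorm hp hf a)

lemma pNorm_le_card_rpow_mul (hp : 0 < p) {s : Finset α} (hs : f.support ⊆ s) {C : ℝ}
    (hC₀ : 0 ≤ C) (hC : ∀ a ∈ s, |f a| ≤ C) :
    pNorm p f ≤ (#s : ℝ) ^ (1/p) * C := by
  rw [pNorm_eq_sum hp.ne' hs]
  calc (∑ a ∈ s, |f a| ^ p) ^ (1/p) ≤ (∑ _a ∈ s, C ^ p) ^ (1/p) := by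
        gcongr with a ha
        exact hC a ha
    _ = (#s : ℝ) ^ (1/p) * C := by
        rw [sum_const, nsmul_eq_mul, mul_rpow (Nat.cast_nonneg _) (rpow_nonneg hC₀ p),
          ← rpow_mul hC₀, mul_one_div_cancel hp.ne', rpow_one]

end pNorm

section lpNormalize

variable {α : Type*} {p : ℝ} {f g : α → ℝ}

noncomputable def lpNormalize (p : ℝ) (f : α → ℝ) : α → ℝ := fun a => (pNorm p f)⁻¹ * f a

lemma support_lpNormalize_subset (p : ℝ) (f : α → ℝ) : (lpNormalize p f).support ⊆ f.support :=
  Function.support_mul_subset_right _ _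

lemma ne_zero_of_lpNormalize_ne_zero {a : α} (h : lpNormalize p f a ≠ 0) : f a ≠ 0 :=
  right_ne_zero_of_mul h

lemma pNorm_lpNormalize_le_one (hp : 0 < p) (f : α → ℝ) : pNorm p (lpNormalize p f) ≤ 1 := by
  unfold lpNormalize
  rw [pNorm_const_mul hp, abs_inv, abs_of_nonneg (pNorm_nonneg p f)]
  exact inv_mul_le_one_of_le₀ le_rfl (pNorm_nonneg p f)

lemma pNorm_lpNormalize (hp : 0 < p) (hf : pNorm p f ≠ 0) : pNorm p (lpNormalize p f) = 1 := by
  unfold lpNormalize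
  rw [pNorm_const_mul hp, abs_inv, abs_of_nonneg (pNorm_nonneg p f),
    inv_mul_cancel₀ hf]

lemma pNorm_lpNormalize_sub_le (hp : 1 ≤ p) (hf : f.support.Finite) (hg : g.support.Finite)
    (hf₀ : 0 < pNorm p f) :
    pNorm p (lpNormalize p f - lpNormalize p g) ≤ 2 * pNorm p (f - g) / pNorm p f := by
  have hp₀ : 0 < p := by positivity
  set A := pNorm p f
  set B := pNorm p g
  have hfg : (f - g).support.Finite := (hf.union hg).subset (Function.support_sub f g)
  -- `f / A - g / B = (f - g) / A + (1 / A - 1 / B) g`, and `|1 / A - 1 / B| B ≤ |A - B| / A`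
  have hdecomp : lpNormalize p f - lpNormalize p g =
      (fun a => A⁻¹ * (f - g) a) + fun a => (A⁻¹ - B⁻¹) * g a := by
    ext a
    simp only [lpNormalize, Pi.add_apply, Pi.sub_apply]
    ring
  have hB : |A⁻¹ - B⁻¹| * B ≤ A⁻¹ * pNorm p (f - g) := by
    have hB₀ : 0 ≤ B := pNorm_nonneg p g
    rcases hB₀.eq_or_lt with hB₀ | hB₀
    · rw [← hB₀, mul_zero]
      exact mul_nonneg (inv_nonneg.2 hf₀.le) (pNorm_nonneg p _)
    · calc |A⁻¹ - B⁻¹| * B = A⁻¹ * |A - B| := by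
            rw [inv_sub_inv hf₀.ne' hB₀.ne', abs_div, abs_mul, abs_of_pos hf₀, abs_of_pos hB₀,
              abs_sub_comm]
            field_simp
        _ ≤ A⁻¹ * pNorm p (f - g) := by
            gcongr
            exact abs_pNorm_sub_pNorm_le hp hf hg
  rw [hdecomp]
  calc _ ≤ pNorm p (fun a => A⁻¹ * (f - g) a) + pNorm p (fun a => (A⁻¹ - B⁻¹) * g a) :=
        pNorm_add_le hp (hfg.subset (Function.support_mul_subset_right _ _))
          (hg.subset (Function.support_mul_subset_right _ _))
    _ = A⁻¹ * pNorm p (f - g) + |A⁻¹ - B⁻¹| * B := by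
        rw [pNorm_const_mul hp₀, pNorm_const_mul hp₀, abs_inv, abs_of_pos hf₀]
    _ ≤ 2 * pNorm p (f - g) / A := by
        rw [mul_div_assoc, div_eq_inv_mul]
        linarith

end lpNormalize

section lpCombination

variable {ι Z : Type*} {p : ℝ} {k : ι → Z → ℝ} {c d : ι → ℝ}

noncomputable def lpCombination (p : ℝ) (k : ι → Z → ℝ) (c : ι → ℝ) : Z → ℝ :=
  fun z => pNorm p (fun i => c i * k i z)

lemma lpCombination_nonneg (p : ℝ) (k : ι → Z → ℝ) (c : ι → ℝ) (z : Z) :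
    0 ≤ lpCombination p k c z :=
  pNorm_nonneg _ _

lemma exists_ne_zero_of_lpCombination_ne_zero (hp : p ≠ 0) {z : Z}
    (h : lpCombination p k c z ≠ 0) : ∃ i, c i ≠ 0 ∧ k i z ≠ 0 := by
  by_contra! hck
  refine h ?_
  have hzero : (fun i => c i * k i z) = 0 := by
    ext i
    by_cases hc : c i = 0
    · simp [hc]
    · simp [hck i hc]
  rw [lpCombination, hzero, pNorm_zero hp]

lemma lpCombination_rpow_eq_sum (hp : p ≠ 0) {s : Finset ι} (hc : c.support ⊆ s) (z : Z) :
    lpCombination p k c z ^ p = ∑ i ∈ s, |c i| ^ p * |k i z| ^ p := by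
  rw [lpCombination, pNorm_rpow_eq_sum hp ((Function.support_mul_subset_left _ _).trans hc)]
  simp_rw [abs_mul]
  exact sum_congr rfl fun i _ => mul_rpow (abs_nonneg _) (abs_nonneg _)

lemma pNorm_lpCombination_rpow (hp : 0 < p) {s : Finset ι} (hc : c.support ⊆ s)
    (hk : ∀ i, (k i).support.Finite) :
    pNorm p (lpCombination p k c) ^ p = ∑ i ∈ s, |c i| ^ p * pNorm p (k i) ^ p := by
  classical
  set T := s.biUnion fun i => (hk i).toFinset
  have hkT : ∀ i ∈ s, (k i).support ⊆ T := fun i hi z hz => by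
    simpa [T] using ⟨i, hi, hz⟩
  have hT : (lpCombination p k c).support ⊆ T := fun z hz => by
    obtain ⟨i, hci, hki⟩ := exists_ne_zero_of_lpCombination_ne_zero hp.ne' hz
    exact hkT i (hc hci) hki
  rw [pNorm_rpow_eq_sum hp.ne' hT]
  calc ∑ z ∈ T, |lpCombination p k c z| ^ p = ∑ z ∈ T, ∑ i ∈ s, |c i| ^ p * |k i z| ^ p :=
        sum_congr rfl fun z _ => by
          rw [abs_of_nonneg (lpCombination_nonneg _ _ _ _), lpCombination_rpow_eq_sum hp.ne' hc]
    _ = ∑ i ∈ s, |c i| ^ p * ∑ z ∈ T, |k i z| ^ p := by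
        rw [sum_comm]
        simp_rw [mul_sum]
    _ = ∑ i ∈ s, |c i| ^ p * pNorm p (k i) ^ p :=
        sum_congr rfl fun i hi => by rw [pNorm_rpow_eq_sum hp.ne' (hkT i hi)]

lemma pNorm_lpCombination (hp : 0 < p) (hc : c.support.Finite) (hk : ∀ i, (k i).support.Finite)
    (hk₁ : ∀ i, c i ≠ 0 → pNorm p (k i) = 1) :
    pNorm p (lpCombination p k c) = pNorm p c := by
  refine rpow_left_injOn hp.ne' (pNorm_nonneg _ _) (pNorm_nonneg _ _) ?_
  simp only
  rw [pNorm_lpCombination_rpow hp hc.coe_toFinset.superset hk,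
    pNorm_rpow_eq_sum hp.ne' hc.coe_toFinset.superset]
  refine sum_congr rfl fun i hi => ?_
  rw [hk₁ i (by simpa using hi), one_rpow, mul_one]

lemma pNorm_lpCombination_sub_le (hp : 1 ≤ p) (hc : c.support.Finite) (hd : d.support.Finite)
    (hk : ∀ i, (k i).support.Finite) (hk₁ : ∀ i, pNorm p (k i) ≤ 1) :
    pNorm p (lpCombination p k c - lpCombination p k d) ≤ pNorm p (c - d) := by
  classical
  have hp₀ : 0 < p := by positivity
  have hcd : (c - d).support.Finite := (hc.union hd).subset (Function.support_sub c d)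
  set s := hcd.toFinset
  have hpt : ∀ z, |lpCombination p k c z - lpCombination p k d z|
      ≤ |lpCombination p k (c - d) z| := fun z => by
    have h := abs_pNorm_sub_pNorm_le hp (f := fun i => c i * k i z) (g := fun i => d i * k i z)
      (hc.subset (Function.support_mul_subset_left _ _))
      (hd.subset (Function.support_mul_subset_left _ _))
    have hsub : ((fun i => c i * k i z) - fun i => d i * k i z) = fun i => (c - d) i * k i z := by
      ext i
      simp only [Pi.sub_apply]
      ring
    rw [hsub] at h
    rwa [abs_of_nonneg (lpCombination_nonneg _ _ _ _)]
  have hfin : (lpCombination p k (c - d)).support.Finite :=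
    (s.biUnion fun i => (hk i).toFinset).finite_toSet.subset fun z hz => by
      obtain ⟨i, hci, hki⟩ := exists_ne_zero_of_lpCombination_ne_zero hp₀.ne' hz
      simpa [s] using ⟨i, hci, hki⟩
  refine (pNorm_le_pNorm hp₀ hfin hpt).trans ?_
  rw [← rpow_le_rpow_iff (pNorm_nonneg _ _) (pNorm_nonneg _ _) hp₀,
    pNorm_lpCombination_rpow hp₀ hcd.coe_toFinset.superset hk,
    pNorm_rpow_eq_sum hp₀.ne' hcd.coe_toFinset.superset]
  refine sum_le_sum fun i _ => mul_le_of_le_one_right (rpow_nonneg (abs_nonneg _) p) ?_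
  exact rpow_le_one (pNorm_nonneg _ _) (hk₁ i) hp₀.le

end lpCombination

section normalizedKernel

variable {ι X : Type*} {p : ℝ} {ψ : ι → X → ℝ} {x y : X}

noncomputable def normalizedKernel (p : ℝ) (ψ : ι → X → ℝ) (x : X) : X → ℝ :=
  lpCombination p (fun i => lpNormalize p (ψ i)) (lpNormalize p fun i => ψ i x)

lemma pNorm_normalizedKernel (hp : 0 < p) (hψ : ∀ i, (ψ i).support.Finite)
    (hx : (fun i => ψ i x).support.Finite) (hx₀ : pNorm p (fun i => ψ i x) ≠ 0) :
    pNorm p (normalizedKernel p ψ x) = 1 := by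
  rw [normalizedKernel, pNorm_lpCombination hp (hx.subset (support_lpNormalize_subset _ _))
    (fun i => (hψ i).subset (support_lpNormalize_subset _ _)), pNorm_lpNormalize hp hx₀]
  intro i hi
  have hψx : ψ i x ≠ 0 := ne_zero_of_lpNormalize_ne_zero (f := (ψ · x)) hi
  exact pNorm_lpNormalize hp (pNorm_pos hp (hψ i) hψx).ne'

lemma exists_ne_zero_of_normalizedKernel_ne_zero (hp : p ≠ 0) {z : X}
    (h : normalizedKernel p ψ x z ≠ 0) : ∃ i, ψ i x ≠ 0 ∧ ψ i z ≠ 0 := by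
  obtain ⟨i, hx, hz⟩ := exists_ne_zero_of_lpCombination_ne_zero hp h
  exact ⟨i, ne_zero_of_lpNormalize_ne_zero (f := (ψ · x)) hx,
    ne_zero_of_lpNormalize_ne_zero hz⟩

lemma pNorm_normalizedKernel_sub_le (hp : 1 ≤ p) (hψ : ∀ i, (ψ i).support.Finite)
    (hx : (fun i => ψ i x).support.Finite) (hy : (fun i => ψ i y).support.Finite)
    (hx₀ : 0 < pNorm p (fun i => ψ i x)) :
    pNorm p (normalizedKernel p ψ x - normalizedKernel p ψ y)
      ≤ 2 * pNorm p (fun i => ψ i x - ψ i y) / pNorm p (fun i => ψ i x) := by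
  have hp₀ : 0 < p := by positivity
  refine (pNorm_lpCombination_sub_le hp (hx.subset (support_lpNormalize_subset _ _))
    (hy.subset (support_lpNormalize_subset _ _))
    (fun i => (hψ i).subset (support_lpNormalize_subset _ _))
    (fun i => pNorm_lpNormalize_le_one hp₀ _)).trans ?_
  exact pNorm_lpNormalize_sub_le hp hx hy hx₀

end normalizedKernel

section truncDistCompl

variable {X : Type*} [MetricSpace X] {L : ℝ} {U : Set X} {x : X}

/-- The paper's `ψ_U(x) = d(x, X ∖ U)`, truncated at `L` so that it stays finite for `U = X`
(where `infEDist` is `⊤`); this does not change it where the `L`-ball around `x` lies in `U`. -/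
noncomputable def truncDistCompl (L : ℝ) (U : Set X) (x : X) : ℝ :=
  (Metric.infEDist x Uᶜ ⊓ ENNReal.ofReal L).toReal

lemma support_truncDistCompl_subset (L : ℝ) (U : Set X) : (truncDistCompl L U).support ⊆ U :=
  fun x hx => by
    by_contra hxU
    simp [truncDistCompl, Metric.infEDist_zero_of_mem (Set.mem_compl hxU)] at hx

lemma truncDistCompl_eq_of_ball_subset (hL : 0 ≤ L) (h : Metric.ball x L ⊆ U) :
    truncDistCompl L U x = L := by
  have hLU : ENNReal.ofReal L ≤ Metric.infEDist x Uᶜ := Metric.le_infEDist.2 fun z hz => by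
    rw [edist_dist]
    exact ENNReal.ofReal_le_ofReal (not_lt.1 fun hzx => hz (h (Metric.mem_ball'.2 hzx)))
  rw [truncDistCompl, inf_eq_right.2 hLU, ENNReal.toReal_ofReal hL]

lemma lipschitzWith_truncDistCompl (L : ℝ) (U : Set X) : LipschitzWith 1 (truncDistCompl L U) := by
  refine LipschitzWith.of_le_add fun x y => ?_
  have hy : Metric.infEDist y Uᶜ ⊓ ENNReal.ofReal L ≠ ⊤ :=
    ne_top_of_le_ne_top ENNReal.ofReal_ne_top inf_le_right
  have hxy : Metric.infEDist x Uᶜ ⊓ ENNReal.ofReal L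
      ≤ Metric.infEDist y Uᶜ ⊓ ENNReal.ofReal L + edist x y := by
    rw [← min_add_add_right]
    exact inf_le_inf Metric.infEDist_le_infEDist_add_edist le_self_add
  calc truncDistCompl L U x ≤ (Metric.infEDist y Uᶜ ⊓ ENNReal.ofReal L + edist x y).toReal :=
        ENNReal.toReal_mono (ENNReal.add_ne_top.2 ⟨hy, edist_ne_top x y⟩) hxy
    _ = truncDistCompl L U y + dist x y := by
        rw [ENNReal.toReal_add hy (edist_ne_top x y), ← dist_edist]
        rfl

end truncDistCompl

section cover

variable {X ι : Type*} [MetricSpace X] {p L : ℝ} (U : ι → Set X)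

lemma Set.Finite.of_forall_dist_le {S : ℝ} (hS : ∀ x : X, (Metric.closedBall x S).Finite)
    {V : Set X} (hV : ∀ a ∈ V, ∀ b ∈ V, dist a b ≤ S) : V.Finite := by
  rcases V.eq_empty_or_nonempty with rfl | ⟨a, ha⟩
  · exact Set.finite_empty
  · exact (hS a).subset fun b hb => by
      rw [Metric.mem_closedBall, dist_comm]
      exact hV a ha b hb

lemma le_pNorm_truncDistCompl (hp : 0 < p) (hL : 0 ≤ L) {x : X} (hx : {i | x ∈ U i}.Finite)
    (hleb : ∃ i, Metric.ball x L ⊆ U i) : L ≤ pNorm p (fun i => truncDistCompl L (U i) x) := by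
  obtain ⟨i, hi⟩ := hleb
  calc L = |truncDistCompl L (U i) x| := by
        rw [truncDistCompl_eq_of_ball_subset hL hi, abs_of_nonneg hL]
    _ ≤ _ := abs_le_pNorm hp (hx.subset fun j hj => support_truncDistCompl_subset L (U j) hj) i

lemma pNorm_truncDistCompl_sub_le (hp : 0 < p) {m : ℕ} (hm : ∀ x, {i | x ∈ U i}.encard ≤ m)
    (x y : X) :
    pNorm p (fun i => truncDistCompl L (U i) x - truncDistCompl L (U i) y)
      ≤ (2 * m : ℝ) ^ (1/p) * dist x y := by
  classical
  obtain ⟨hx, hxm⟩ := Set.encard_le_coe_iff_finite_ncard_le.1 (hm x)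
  obtain ⟨hy, hym⟩ := Set.encard_le_coe_iff_finite_ncard_le.1 (hm y)
  set s := (hx.union hy).toFinset
  have hs : (#s : ℝ) ≤ 2 * m := by
    rw [← Set.ncard_eq_toFinset_card _ (hx.union hy)]
    exact_mod_cast (Set.ncard_union_le _ _).trans (by omega)
  have hsupp : (fun i => truncDistCompl L (U i) x - truncDistCompl L (U i) y).support ⊆ s :=
    fun i hi => by
      rw [Set.Finite.coe_toFinset]
      by_contra hxy
      simp only [Set.mem_union, Set.mem_ofPred_eq, not_or] at hxy
      simp [Function.notMem_support.1 fun h => hxy.1 (support_truncDistCompl_subset L _ h),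
        Function.notMem_support.1 fun h => hxy.2 (support_truncDistCompl_subset L _ h)] at hi
  calc _ ≤ (#s : ℝ) ^ (1/p) * dist x y :=
        pNorm_le_card_rpow_mul hp hsupp dist_nonneg fun i _ => by
          simpa [Real.dist_eq] using (lipschitzWith_truncDistCompl L (U i)).dist_le_mul x y
    _ ≤ (2 * m : ℝ) ^ (1/p) * dist x y := by gcongr

noncomputable def coverKernel (p L : ℝ) : X → X → ℝ :=
  normalizedKernel p fun i => truncDistCompl L (U i)

variable {U}

lemma pNorm_coverKernel (hp : 0 < p) (hL : 0 < L) (hU : ∀ i, (U i).Finite) {x : X}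
    (hx : {i | x ∈ U i}.Finite) (hleb : ∃ i, Metric.ball x L ⊆ U i) :
    pNorm p (coverKernel U p L x) = 1 :=
  pNorm_normalizedKernel hp (fun i => (hU i).subset (support_truncDistCompl_subset L (U i)))
    (hx.subset fun i hi => support_truncDistCompl_subset L (U i) hi)
    (hL.trans_le (le_pNorm_truncDistCompl U hp hL.le hx hleb)).ne'

lemma exists_mem_of_coverKernel_ne_zero (hp : p ≠ 0) {x z : X} (h : coverKernel U p L x z ≠ 0) :
    ∃ i, x ∈ U i ∧ z ∈ U i := by
  obtain ⟨i, hx, hz⟩ := exists_ne_zero_of_normalizedKernel_ne_zero hp h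
  exact ⟨i, support_truncDistCompl_subset L (U i) hx, support_truncDistCompl_subset L (U i) hz⟩

lemma pNorm_coverKernel_sub_le (hp : 1 ≤ p) (hL : 0 < L) (hU : ∀ i, (U i).Finite) {m : ℕ}
    (hm : ∀ x, {i | x ∈ U i}.encard ≤ m) (hleb : ∀ x, ∃ i, Metric.ball x L ⊆ U i) (x y : X) :
    pNorm p (coverKernel U p L x - coverKernel U p L y)
      ≤ (2 * (2 * m : ℝ) ^ (1/p) / L) * dist x y := by
  have hp₀ : 0 < p := by positivity
  have hfin : ∀ x, {i | x ∈ U i}.Finite := fun x => Set.finite_of_encard_le_coe (hm x)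
  have hψ : ∀ x, (fun i => truncDistCompl L (U i) x).support.Finite := fun x =>
    (hfin x).subset fun i hi => support_truncDistCompl_subset L (U i) hi
  have hLx := le_pNorm_truncDistCompl U hp₀ hL.le (hfin x) (hleb x)
  calc _ ≤ 2 * pNorm p (fun i => truncDistCompl L (U i) x - truncDistCompl L (U i) y)
        / pNorm p (fun i => truncDistCompl L (U i) x) :=
        pNorm_normalizedKernel_sub_le hp
          (fun i => (hU i).subset (support_truncDistCompl_subset L (U i))) (hψ x) (hψ y)
          (hL.trans_le hLx)
    _ ≤ 2 * ((2 * m : ℝ) ^ (1/p) * dist x y) / L := by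
        gcongr
        exact pNorm_truncDistCompl_sub_le U hp₀ hm x y
    _ = (2 * (2 * m : ℝ) ^ (1/p) / L) * dist x y := by ring

end cover

theorem stmt11_general {X : Type*} [MetricSpace X]
    (hbg : ∀ R : ℝ, ∃ C : ℕ, ∀ x : X, (Metric.closedBall x R).encard ≤ C)
    (𝔘 : Set (Set X))
    (m : ℕ) (hm : ∀ x : X, {U ∈ 𝔘 | x ∈ U}.encard ≤ m)
    (S : ℝ) (hmesh : ∀ U ∈ 𝔘, ∀ a ∈ U, ∀ b ∈ U, dist a b ≤ S)
    (L : ℝ) (hL : 0 < L)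
    (hleb : ∀ x : X, ∃ U ∈ 𝔘, Metric.ball x L ⊆ U)
    (p : ℝ) (hp : 1 ≤ p) :
    ∃ ξ : X → X → ℝ,
      (∀ x, pNorm p (ξ x) = 1) ∧
      (∀ x z : X, ξ x z ≠ 0 → dist x z ≤ S) ∧
      (∀ x y : X, pNorm p (fun z => ξ x z - ξ y z)
        ≤ (2 * (2 * (m : ℝ) ^ 2) ^ (1/p) / L) * dist x y) := by
  have hball : ∀ x : X, (Metric.closedBall x S).Finite := fun x => by
    obtain ⟨C, hC⟩ := hbg S
    exact Set.finite_of_encard_le_coe (hC x)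
  have hU : ∀ V : 𝔘, (V : Set X).Finite := fun V =>
    Set.Finite.of_forall_dist_le hball (hmesh V V.2)
  have hmult : ∀ x, {V : 𝔘 | x ∈ (V : Set X)}.encard ≤ m := fun x => by
    rw [← Subtype.val_injective.encard_image]
    convert hm x using 2
    ext V
    simp [and_comm]
  have hleb' : ∀ x, ∃ V : 𝔘, Metric.ball x L ⊆ (V : Set X) := fun x => by
    obtain ⟨V, hV, hxV⟩ := hleb x
    exact ⟨⟨V, hV⟩, hxV⟩
  refine ⟨coverKernel (Subtype.val : 𝔘 → Set X) p L, fun x => ?_, fun x z h => ?_, fun x y => ?_⟩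
  · exact pNorm_coverKernel (by positivity) hL hU (Set.finite_of_encard_le_coe (hmult x)) (hleb' x)
  · obtain ⟨V, hx, hz⟩ := exists_mem_of_coverKernel_ne_zero (by positivity) h
    exact hmesh V V.2 x hx z hz
  · refine (pNorm_coverKernel_sub_le hp hL hU hmult hleb' x y).trans ?_
    gcongr
    exact_mod_cast Nat.le_self_pow two_ne_zero m

/-- a cover with finite multiplicity `m`, mesh at most `S` and Lebesgue
number at least `L > 0` yields a unit-norm kernel of propagation at most `S` which is
`2(2m²)^{1/p}/L`-Lipschitz into `ℓ^p(X)`. -/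
theorem stmt11 {X : Type*} [MetricSpace X]
    (hbg : ∀ R : ℝ, ∃ C : ℕ, ∀ x : X, (Metric.closedBall x R).encard ≤ C)
    (𝔘 : Set (Set X)) (hcover : ⋃₀ 𝔘 = Set.univ)
    (m : ℕ) (hm : ∀ x : X, {U ∈ 𝔘 | x ∈ U}.encard ≤ m)
    (S : ℝ) (hmesh : ∀ U ∈ 𝔘, ∀ a ∈ U, ∀ b ∈ U, dist a b ≤ S)
    (L : ℝ) (hL : 0 < L)
    (hleb : ∀ x : X, ∃ U ∈ 𝔘, Metric.ball x L ⊆ U)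
    (p : ℝ) (hp : 1 ≤ p) :
    ∃ ξ : X → X → ℝ,
      (∀ x, pNorm p (ξ x) = 1) ∧
      (∀ x z : X, ξ x z ≠ 0 → dist x z ≤ S) ∧
      (∀ x y : X, pNorm p (fun z => ξ x z - ξ y z)
        ≤ (2 * (2 * (m : ℝ) ^ 2) ^ (1/p) / L) * dist x y) :=
  stmt11_general hbg 𝔘 m hm S hmesh L hL hleb p hp
end

section
/- Let n ≥ 2, 𝔸^{n−1} = {x ∈ ℝⁿ : Σxᵢ = 0} with norm ‖x‖ = Σ|xᵢ|, and V = {x ∈ 𝔸^{n−1} : φ_I(x) ≤ 1/2 for all proper nonempty I ⊆ {1,…,n}}, where φ_I(x) = n(Σ_{i∈I}xᵢ)/(#I·#Iᶜ). Let Λ = 𝔸^{n−1} ∩ ℤⁿ and let [i] ∈ 𝔸^{n−1} have coordinates [i]_j = i − n if j ≤ i and i if j > i. Then for each fixed i, any two distinct translates x + V and x' + V with x, x' ∈ [i] + Λ, x ≠ x', are at distance at least 1/(n−1) from each other. -/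
/-- The functional `φ_I(x) = n(Σ_{i∈I} xᵢ)/(#I·#Iᶜ)` on the zero-sum hyperplane in `ℝⁿ`. -/
noncomputable def phiI {n : ℕ} (I : Finset (Fin n)) (x : Fin n → ℝ) : ℝ :=
  (n : ℝ) * (∑ i ∈ I, x i) / ((I.card : ℝ) * (Iᶜ.card : ℝ))

/-- The polytope `V = {x ∈ 𝔸^{n-1} : φ_I(x) ≤ 1/2 for all proper nonempty I}`. -/
def Vset (n : ℕ) : Set (Fin n → ℝ) :=
  {x | (∑ i, x i = 0) ∧
    ∀ I : Finset (Fin n), I.Nonempty → I ≠ Finset.univ → phiI I x ≤ 1/2}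

/-- The vector `[i] ∈ 𝔸^{n-1}` with `[i]_j = i - n` for `j ≤ i` (1-indexed) and `i` otherwise. -/
def bracket (n i : ℕ) : Fin n → ℝ := fun j => if (j : ℕ) < i then (i : ℝ) - n else i

/-- distinct translates `x + V`, `x' + V` with `x, x' ∈ [i] + Λ` are at
`ℓ¹`-distance at least `1/(n-1)`. -/
theorem stmt14 (n : ℕ) (hn : 2 ≤ n) (i : ℕ) (hi : i < n)
    (x x' : Fin n → ℝ)
    (hx : ∃ l : Fin n → ℤ, (∑ j, l j) = 0 ∧ ∀ j, x j = bracket n i j + l j)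
    (hx' : ∃ l : Fin n → ℤ, (∑ j, l j) = 0 ∧ ∀ j, x' j = bracket n i j + l j)
    (hne : x ≠ x') :
    ∀ z z' : Fin n → ℝ,
      (fun j => z j - x j) ∈ Vset n → (fun j => z' j - x' j) ∈ Vset n →
      1 / ((n : ℝ) - 1) ≤ ∑ j, |z j - z' j| := by
  obtain ⟨l, hl0, hl⟩ := hx
  obtain ⟨l', hl'0, hl'⟩ := hx'
  have hm_sum : (∑ j, (l j - l' j)) = 0 := by
    rw [Finset.sum_sub_distrib, hl0, hl'0]; ring
  have hm_ne : ∃ j, l j - l' j ≠ 0 := by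
    by_contra h
    push_neg at h
    apply hne
    funext j
    have h2 : l j = l' j := by have := h j; omega
    rw [hl j, hl' j, h2]
  obtain ⟨j₁, hj₁⟩ := hm_ne
  have hpos : ∃ j₀, 1 ≤ l j₀ - l' j₀ := by
    by_contra h
    push_neg at h
    have hall := (Finset.sum_eq_zero_iff_of_nonpos
      (fun j _ => by have := h j; omega)).mp hm_sum j₁ (Finset.mem_univ j₁)
    exact hj₁ hall
  obtain ⟨i₀, hi₀⟩ := hpos
  intro z z' hz hz'
  obtain ⟨hzs, hzφ⟩ := hz
  obtain ⟨hz's, hz'φ⟩ := hz'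
  set I : Finset (Fin n) := {i₀} with hI
  have hN : (2 : ℝ) ≤ (n : ℝ) := by exact_mod_cast hn
  have hcard1 : I.card = 1 := Finset.card_singleton _
  have hcardc : Iᶜ.card = n - 1 := by
    rw [Finset.card_compl, hcard1, Fintype.card_fin]
  have hcardcR : ((Iᶜ.card : ℕ) : ℝ) = (n : ℝ) - 1 := by
    rw [hcardc]
    push_cast [Nat.cast_sub (by omega : 1 ≤ n)]
    ring
  have hIne : I ≠ Finset.univ := by
    intro h
    have := Finset.card_univ (α := Fin n)
    rw [← h, hcard1, Fintype.card_fin] at this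
    omega
  have hIcne : Iᶜ ≠ Finset.univ := by
    intro h
    have := Finset.card_univ (α := Fin n)
    rw [← h, hcardc, Fintype.card_fin] at this
    omega
  have hIcnonempty : (Iᶜ : Finset (Fin n)).Nonempty := by
    rw [← Finset.card_pos, hcardc]; omega
  -- sum over complement for z - x
  have hsumc : ∑ j ∈ Iᶜ, (z j - x j) = -(z i₀ - x i₀) := by
    have h := Finset.sum_compl_add_sum I (fun j => z j - x j)
    rw [hI, Finset.sum_singleton] at h
    rw [hI]
    linarith [hzs, h]
  -- lower bound on z i₀ - x i₀
  have h1 : phiI Iᶜ (fun j => z j - x j) ≤ 1/2 := hzφ Iᶜ hIcnonempty hIcne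
  have hu_lb : -((n:ℝ) - 1) ≤ 2 * n * (z i₀ - x i₀) := by
    unfold phiI at h1
    rw [compl_compl, hsumc, hcardcR, hcard1] at h1
    rw [div_le_iff₀ (by push_cast; nlinarith : (0:ℝ) < ((n:ℝ) - 1) * ((1:ℕ):ℝ))] at h1
    push_cast at h1
    linarith
  -- upper bound on z' i₀ - x' i₀
  have h2 : phiI I (fun j => z' j - x' j) ≤ 1/2 := hz'φ I ⟨i₀, Finset.mem_singleton_self i₀⟩ hIne
  have hu'_ub : 2 * n * (z' i₀ - x' i₀) ≤ (n:ℝ) - 1 := by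
    unfold phiI at h2
    rw [hI, Finset.sum_singleton] at h2
    rw [← hI, hcard1, hcardcR] at h2
    rw [div_le_iff₀ (by push_cast; nlinarith : (0:ℝ) < ((1:ℕ):ℝ) * ((n:ℝ) - 1))] at h2
    push_cast at h2
    linarith
  -- x i₀ - x' i₀ ≥ 1
  have hxdiff : (1:ℝ) ≤ x i₀ - x' i₀ := by
    rw [hl i₀, hl' i₀]
    have h4 : (1:ℝ) ≤ ((l i₀ - l' i₀ : ℤ) : ℝ) := by exact_mod_cast hi₀
    push_cast at h4 ⊢
    linarith
  -- lower bound on the key coordinate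
  have hkey : 1 / (n:ℝ) ≤ z i₀ - z' i₀ := by
    rw [div_le_iff₀ (by nlinarith : (0:ℝ) < (n:ℝ))]
    nlinarith
  -- total sum of z - z' is zero
  have hvs : ∑ j, (z j - z' j) = 0 := by
    have e1 : ∀ j, z j - z' j = (z j - x j) - (z' j - x' j) + ((l j - l' j : ℤ) : ℝ) := by
      intro j
      rw [hl j, hl' j]
      push_cast
      ring
    rw [Finset.sum_congr rfl (fun j _ => e1 j)]
    rw [Finset.sum_add_distrib, Finset.sum_sub_distrib]
    have e2 : ∑ j, ((l j - l' j : ℤ) : ℝ) = 0 := by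
      rw [← Int.cast_sum]
      exact_mod_cast congrArg (Int.cast : ℤ → ℝ) hm_sum
    rw [e2, hzs, hz's]
    ring
  -- complement sum of z - z'
  have hvc : ∑ j ∈ Iᶜ, (z j - z' j) = -(z i₀ - z' i₀) := by
    have h := Finset.sum_compl_add_sum I (fun j => z j - z' j)
    rw [hI, Finset.sum_singleton] at h
    rw [hI]
    linarith [hvs, h]
  -- put it together
  have hsplit := Finset.sum_compl_add_sum I (fun j => |z j - z' j|)
  rw [hI, Finset.sum_singleton] at hsplit
  have habs : |∑ j ∈ Iᶜ, (z j - z' j)| ≤ ∑ j ∈ Iᶜ, |z j - z' j| :=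
    Finset.abs_sum_le_sum_abs _ _
  rw [hvc, abs_neg] at habs
  have hzpos : 0 < z i₀ - z' i₀ := lt_of_lt_of_le (by positivity) hkey
  rw [abs_of_pos hzpos] at habs
  have hfinal : 2 * (z i₀ - z' i₀) ≤ ∑ j, |z j - z' j| := by
    rw [← hI] at hsplit
    have := le_abs_self (z i₀ - z' i₀)
    linarith
  have h2n : 1 / ((n:ℝ) - 1) ≤ 2 / (n:ℝ) := by
    rw [div_le_div_iff₀ (by nlinarith) (by nlinarith)]
    nlinarith
  calc 1 / ((n:ℝ) - 1) ≤ 2 / (n:ℝ) := h2n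
    _ = 2 * (1 / (n:ℝ)) := by ring
    _ ≤ 2 * (z i₀ - z' i₀) := by linarith
    _ ≤ ∑ j, |z j - z' j| := hfinal
end

section
/- Let n = 2k and V ⊂ 𝔸^{2k−1} be the polytope {x : φ_I(x) ≤ 1/2 for all proper nonempty I}, whose extreme points are the coordinate permutations of σ = (4k)^{−1}(1 − 2k, 3 − 2k, …, 2k − 1). Then ‖σ‖ = k/2 in the norm ‖x‖ = Σ|xᵢ|; consequently every set of the cover 𝔘 = ∪_{i=0}^{2k−1}{[i] + x + V : x ∈ Λ} has diameter at most k. -/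
lemma sum_odd (m : ℕ) : ∑ j ∈ Finset.range m, (2 * (j : ℝ) + 1) = (m : ℝ)^2 := by
  induction m with
  | zero => simp
  | succ n ih => rw [Finset.sum_range_succ, ih]; push_cast; ring

lemma vset_diam (k : ℕ) (hk : 1 ≤ k) (u v : Fin (2*k) → ℝ)
    (hu : u ∈ Vset (2*k)) (hv : v ∈ Vset (2*k)) :
    ∑ j, |u j - v j| ≤ (k : ℝ) := by
  obtain ⟨hu0, hu1⟩ := hu
  obtain ⟨hv0, hv1⟩ := hv
  have hk' : (0:ℝ) < k := by exact_mod_cast hk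
  have hsum0 : ∑ j, (u j - v j) = 0 := by
    rw [Finset.sum_sub_distrib, hu0, hv0]; ring
  set I : Finset (Fin (2*k)) := Finset.univ.filter (fun j => 0 < u j - v j) with hI
  by_cases hIe : I = ∅
  · have hle : ∀ j, u j - v j ≤ 0 := by
      intro j
      by_contra h
      have hj : j ∈ I := by
        rw [hI, Finset.mem_filter]
        exact ⟨Finset.mem_univ _, lt_of_not_ge (fun h' => h (by linarith))⟩
      rw [hIe] at hj; exact absurd hj (Finset.notMem_empty j)
    have hz : ∀ j ∈ Finset.univ, u j - v j = 0 :=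
      (Finset.sum_eq_zero_iff_of_nonpos (fun j _ => hle j)).mp hsum0
    have : ∑ j, |u j - v j| = 0 := by
      apply Finset.sum_eq_zero
      intro j hj; rw [hz j hj, abs_zero]
    rw [this]; positivity
  by_cases hIu : I = Finset.univ
  · exfalso
    have hpos : 0 < ∑ j, (u j - v j) := by
      apply Finset.sum_pos
      · intro j hj
        have : j ∈ I := by rw [hIu]; exact hj
        rw [hI, Finset.mem_filter] at this; exact this.2
      · have : (0:ℕ) < 2*k := by omega
        exact ⟨⟨0, this⟩, Finset.mem_univ _⟩
    linarith [hsum0]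
  -- main case
  have hIne : I.Nonempty := Finset.nonempty_iff_ne_empty.mpr hIe
  have hIclt : I.card < 2*k := by
    have h := Finset.card_lt_card (Finset.ssubset_univ_iff.mpr hIu)
    simpa [Finset.card_univ] using h
  have hIcne : Iᶜ.Nonempty := by
    rw [← Finset.card_pos, Finset.card_compl, Fintype.card_fin]
    omega
  have hIcnu : Iᶜ ≠ Finset.univ := by
    intro h; exact hIe ((Finset.compl_eq_univ_iff I).mp h)
  have hccompl : Iᶜᶜ = I := compl_compl I
  have hcadd : I.card + Iᶜ.card = 2*k := by
    have := Finset.card_add_card_compl I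
    simpa [Fintype.card_fin] using this
  set c : ℝ := (I.card : ℝ) with hc
  set d : ℝ := (Iᶜ.card : ℝ) with hd
  have hcpos : 0 < c := by rw [hc]; exact_mod_cast Finset.card_pos.mpr hIne
  have hdpos : 0 < d := by rw [hd]; exact_mod_cast Finset.card_pos.mpr hIcne
  have hcd : c + d = 2*k := by
    rw [hc, hd]; exact_mod_cast hcadd
  have hA : ∑ i ∈ I, u i ≤ c * d / (4*k) := by
    have h1 := hu1 I hIne hIu
    rw [phiI, div_le_iff₀ (by rw [← hc, ← hd]; positivity)] at h1
    push_cast at h1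
    rw [le_div_iff₀ (by positivity), ← hc, ← hd] at *
    nlinarith
  have hB : ∑ i ∈ Iᶜ, v i ≤ c * d / (4*k) := by
    have h1 := hv1 Iᶜ hIcne hIcnu
    rw [phiI, hccompl] at h1
    rw [div_le_iff₀ (by rw [← hc, ← hd]; positivity)] at h1
    push_cast at h1
    rw [le_div_iff₀ (by positivity), ← hc, ← hd] at *
    nlinarith
  have hIv : ∑ i ∈ I, v i = - ∑ i ∈ Iᶜ, v i := by
    have := Finset.sum_add_sum_compl I v
    rw [hv0] at this; linarith
  have hSI : ∑ i ∈ I, (u i - v i) ≤ c * d / (2*k) := by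
    rw [Finset.sum_sub_distrib, hIv]
    have : c * d / (4*k) + c * d / (4*k) = c * d / (2*k) := by
      field_simp; ring
    linarith
  have hsplit : ∑ j, |u j - v j| = 2 * ∑ i ∈ I, (u i - v i) := by
    have h1 : ∑ i ∈ I, |u i - v i| = ∑ i ∈ I, (u i - v i) := by
      apply Finset.sum_congr rfl
      intro i hi
      rw [hI, Finset.mem_filter] at hi
      exact abs_of_pos hi.2
    have h2 : ∑ i ∈ Iᶜ, |u i - v i| = ∑ i ∈ Iᶜ, -(u i - v i) := by
      apply Finset.sum_congr rfl
      intro i hi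
      rw [Finset.mem_compl, hI, Finset.mem_filter] at hi
      have : ¬ (0 < u i - v i) := fun h => hi ⟨Finset.mem_univ _, h⟩
      exact abs_of_nonpos (le_of_not_gt this)
    have h3 := Finset.sum_add_sum_compl I (fun j => |u j - v j|)
    have h4 := Finset.sum_add_sum_compl I (fun j => u j - v j)
    rw [hsum0] at h4
    rw [← h3, h1, h2, Finset.sum_neg_distrib]
    linarith
  rw [hsplit]
  have : c * d / (2*k) ≤ (k:ℝ)/2 := by
    rw [div_le_div_iff₀ (by positivity) (by positivity)]
    nlinarith [sq_nonneg (c - d)]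
  linarith

lemma sigma_norm (k : ℕ) (hk : 1 ≤ k) :
    (∑ j : Fin (2 * k), |((2 * (j : ℕ) + 1 : ℝ) - 2 * k) / (4 * k)| = (k : ℝ) / 2) := by
  have hk' : (0:ℝ) < k := by exact_mod_cast hk
  rw [Fin.sum_univ_eq_sum_range (fun j => |((2 * (j : ℕ) + 1 : ℝ) - 2 * k) / (4 * k)|)]
  have habs : ∀ j : ℕ, |((2 * (j : ℕ) + 1 : ℝ) - 2 * k) / (4 * k)|
      = |(2 * (j : ℕ) + 1 : ℝ) - 2 * k| / (4 * k) := by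
    intro j
    rw [abs_div, abs_of_pos (by positivity : (0:ℝ) < 4*(k:ℝ))]
  simp only [habs]
  rw [← Finset.sum_div]
  have key : ∑ j ∈ Finset.range (2*k), |(2 * (j : ℕ) + 1 : ℝ) - 2 * k| = 2 * (k:ℝ)^2 := by
    rw [Finset.range_eq_Ico,
      ← Finset.sum_Ico_consecutive _ (Nat.zero_le k) (by omega : k ≤ 2*k)]
    have hs1 : ∑ j ∈ Finset.Ico 0 k, |(2 * (j : ℕ) + 1 : ℝ) - 2 * k| = (k:ℝ)^2 := by
      rw [← Finset.range_eq_Ico, ← sum_odd k,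
        ← Finset.sum_range_reflect (fun j => (2 * (j:ℝ) + 1)) k]
      apply Finset.sum_congr rfl
      intro j hj
      rw [Finset.mem_range] at hj
      have hcast : ((k - 1 - j : ℕ) : ℝ) = (k:ℝ) - 1 - j := by
        have : k - 1 - j = k - (1 + j) := by omega
        rw [this, Nat.cast_sub (by omega)]
        push_cast; ring
      have hjk : (j:ℝ) ≤ (k:ℝ) - 1 := by
        have : (j:ℝ) + 1 ≤ k := by exact_mod_cast hj
        linarith
      rw [abs_of_nonpos (by linarith), hcast]
      ring
    have hs2 : ∑ j ∈ Finset.Ico k (2*k), |(2 * (j : ℕ) + 1 : ℝ) - 2 * k| = (k:ℝ)^2 := by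
      rw [Finset.sum_Ico_eq_sum_range]
      have h2k : 2*k - k = k := by omega
      rw [h2k, ← sum_odd k]
      apply Finset.sum_congr rfl
      intro j hj
      have : ((k + j : ℕ) : ℝ) = (k:ℝ) + j := by push_cast; ring
      rw [this, abs_of_nonneg (by push_cast; linarith [Nat.cast_nonneg (α := ℝ) j])]
      ring
    rw [hs1, hs2]; ring
  rw [key]
  field_simp
  ring


/-- for `n = 2k`, the extreme point `σ = (4k)⁻¹(1-2k, 3-2k, …, 2k-1)` of `V`
has `ℓ¹`-norm `k/2`, and every member `[i] + x + V` of the cover has diameter at most `k`. -/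
theorem stmt15 (k : ℕ) (hk : 1 ≤ k) :
    (∑ j : Fin (2 * k), |((2 * (j : ℕ) + 1 : ℝ) - 2 * k) / (4 * k)| = (k : ℝ) / 2) ∧
    (∀ i : ℕ, i < 2 * k → ∀ l : Fin (2 * k) → ℤ, (∑ j, l j) = 0 →
      ∀ a b : Fin (2 * k) → ℝ,
        (fun j => a j - (bracket (2 * k) i j + l j)) ∈ Vset (2 * k) →
        (fun j => b j - (bracket (2 * k) i j + l j)) ∈ Vset (2 * k) →
        ∑ j, |a j - b j| ≤ (k : ℝ)) := by
  refine ⟨sigma_norm k hk, ?_⟩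
  intro i _ l _ a b ha hb
  have := vset_diam k hk _ _ ha hb
  calc ∑ j, |a j - b j|
      = ∑ j, |(a j - (bracket (2*k) i j + l j)) - (b j - (bracket (2*k) i j + l j))| := by
        apply Finset.sum_congr rfl; intro j _; ring_nf
    _ ≤ (k : ℝ) := this
end

section
/- If f ∈ ⊕_ℤ ℤ is a finitely supported function ℤ → ℤ viewed as an element of the lamplighter group ℤ ≀ ℤ, then its word length (for the standard generating set of ℤ ≀ ℤ consisting of the generators of the two copies of ℤ) equals 2·max({0} ∪ {k : f(k) ≠ 0}) + 2·max({0} ∪ {−k : f(k) ≠ 0}) + Σ_{k∈ℤ} |f(k)|. -/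
/-- Generators of the lamplighter group `ℤ ≀ ℤ`: `t^{±1}` (moves of the lamplighter)
and `a^{±1}` (the lamp at the current position). -/
inductive LampGen : Type
  | T : LampGen
  | Tinv : LampGen
  | A : LampGen
  | Ainv : LampGen

/-- Right multiplication by a generator on an element `(f, s)` of
`ℤ ≀ ℤ = (⊕_ℤ ℤ) ⋊ ℤ` (lamp configuration `f`, lamplighter position `s`). -/
noncomputable def lampStep : LampGen → (ℤ →₀ ℤ) × ℤ → (ℤ →₀ ℤ) × ℤ
  | .T, (f, s) => (f, s + 1)
  | .Tinv, (f, s) => (f, s - 1)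
  | .A, (f, s) => (f + Finsupp.single s 1, s)
  | .Ainv, (f, s) => (f - Finsupp.single s 1, s)

/-- Evaluation of a word in the generators, starting at the identity. -/
noncomputable def lampEval (w : List LampGen) : (ℤ →₀ ℤ) × ℤ :=
  w.foldl (fun st g => lampStep g st) (0, 0)

/-- The word length of the element `(f, 0)` of `ℤ ≀ ℤ` with respect to the standard
generating set. -/
noncomputable def lampLength (f : ℤ →₀ ℤ) : ℕ :=
  sInf {n : ℕ | ∃ w : List LampGen, w.length = n ∧ lampEval w = (f, 0)}

namespace LampAux

noncomputable def evalFrom (st : (ℤ →₀ ℤ) × ℤ) (w : List LampGen) : (ℤ →₀ ℤ) × ℤ :=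
  w.foldl (fun st g => lampStep g st) st

lemma lampEval_eq (w : List LampGen) : lampEval w = evalFrom (0, 0) w := rfl

@[simp] lemma evalFrom_nil (st : (ℤ →₀ ℤ) × ℤ) : evalFrom st [] = st := rfl

@[simp] lemma evalFrom_cons (st : (ℤ →₀ ℤ) × ℤ) (g : LampGen) (w : List LampGen) :
    evalFrom st (g :: w) = evalFrom (lampStep g st) w := rfl

@[simp] lemma evalFrom_append (st : (ℤ →₀ ℤ) × ℤ) (u v : List LampGen) :
    evalFrom st (u ++ v) = evalFrom (evalFrom st u) v := List.foldl_append ..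

/-- cost functions -/
def tC : LampGen → ℕ
  | .T => 1 | .Tinv => 1 | _ => 0

def aC : LampGen → ℕ
  | .A => 1 | .Ainv => 1 | _ => 0

def dg : LampGen → ℤ
  | .T => 1 | .Tinv => -1 | _ => 0

def numT (w : List LampGen) : ℕ := (w.map tC).sum
def numA (w : List LampGen) : ℕ := (w.map aC).sum
def disp (w : List LampGen) : ℤ := (w.map dg).sum

@[simp] lemma numT_nil : numT [] = 0 := rfl
@[simp] lemma numA_nil : numA [] = 0 := rfl
@[simp] lemma disp_nil : disp [] = 0 := rfl
@[simp] lemma numT_cons (g w) : numT (g :: w) = tC g + numT w := rfl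
@[simp] lemma numA_cons (g w) : numA (g :: w) = aC g + numA w := rfl
@[simp] lemma disp_cons (g w) : disp (g :: w) = dg g + disp w := by
  simp [disp]
@[simp] lemma numT_append (u v) : numT (u ++ v) = numT u + numT v := by
  simp [numT]
@[simp] lemma numA_append (u v) : numA (u ++ v) = numA u + numA v := by
  simp [numA]
@[simp] lemma disp_append (u v) : disp (u ++ v) = disp u + disp v := by
  simp [disp]

lemma numT_add_numA (w : List LampGen) : numT w + numA w = w.length := by
  induction w with
  | nil => rfl
  | cons g w ih => cases g <;> simp [tC, aC, ← ih] <;> ring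

lemma pos_evalFrom (st : (ℤ →₀ ℤ) × ℤ) (w : List LampGen) :
    (evalFrom st w).2 = st.2 + disp w := by
  induction w generalizing st with
  | nil => simp
  | cons g w ih =>
    obtain ⟨f, s⟩ := st
    cases g <;> simp [ih, lampStep, dg] <;> ring

lemma abs_disp_le_numT (w : List LampGen) : |disp w| ≤ (numT w : ℤ) := by
  induction w with
  | nil => simp
  | cons g w ih =>
    have h1 : |dg g| ≤ (tC g : ℤ) := by cases g <;> simp [dg, tC]
    calc |disp (g :: w)| ≤ |dg g| + |disp w| := by rw [disp_cons]; exact abs_add_le _ _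
    _ ≤ (tC g : ℤ) + numT w := add_le_add h1 ih
    _ = ((numT (g :: w) : ℤ)) := by rw [numT_cons]; push_cast; ring

/-- every lamp in the support of the final configuration was visited -/
lemma visited (w : List LampGen) (k : ℤ) (hk : (lampEval w).1 k ≠ 0) :
    ∃ u, u <+: w ∧ (lampEval u).2 = k := by
  induction w using List.reverseRecOn with
  | nil => simp [lampEval] at hk
  | append_singleton w g ih =>
    rw [lampEval_eq, evalFrom_append, ← lampEval_eq] at hk
    rcases hst : lampEval w with ⟨fw, sw⟩
    rw [hst] at hk ih
    have ext : ∀ u, u <+: w ∧ (lampEval u).2 = k → ∃ u, u <+: (w ++ [g]) ∧ (lampEval u).2 = k :=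
      fun u ⟨hu, hu2⟩ => ⟨u, hu.trans (List.prefix_append _ _), hu2⟩
    cases g with
    | T => exact (ih (by simpa [lampStep] using hk)).elim ext
    | Tinv => exact (ih (by simpa [lampStep] using hk)).elim ext
    | A =>
      by_cases hks : sw = k
      · exact ⟨w, List.prefix_append _ _, by rw [hst, hks]⟩
      · refine (ih ?_).elim ext
        simp only [evalFrom_cons, evalFrom_nil, lampStep] at hk
        intro h0
        apply hk
        simp [Finsupp.single_apply, hks, h0]
    | Ainv =>
      by_cases hks : sw = k
      · exact ⟨w, List.prefix_append _ _, by rw [hst, hks]⟩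
      · refine (ih ?_).elim ext
        simp only [evalFrom_cons, evalFrom_nil, lampStep] at hk
        intro h0
        apply hk
        simp [Finsupp.single_apply, hks, h0]

/-- total lamp weight -/
def wt (f : ℤ →₀ ℤ) : ℕ := ∑ k ∈ f.support, (f k).natAbs

lemma wt_eq_sum_subset (f : ℤ →₀ ℤ) (T : Finset ℤ) (h : f.support ⊆ T) :
    wt f = ∑ k ∈ T, (f k).natAbs := by
  refine Finset.sum_subset h fun k _ hk => ?_
  simp [Finsupp.notMem_support_iff.mp hk]

lemma wt_add_single_le (f : ℤ →₀ ℤ) (s c : ℤ) :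
    wt (f + Finsupp.single s c) ≤ wt f + c.natAbs := by
  set T : Finset ℤ := insert s (f.support ∪ (f + Finsupp.single s c).support) with hT
  have hsT : s ∈ T := Finset.mem_insert_self _ _
  rw [wt_eq_sum_subset f T (by intro k hk; exact Finset.mem_insert_of_mem (Finset.mem_union_left _ hk)),
      wt_eq_sum_subset (f + Finsupp.single s c) T
        (by intro k hk; exact Finset.mem_insert_of_mem (Finset.mem_union_right _ hk))]
  calc ∑ k ∈ T, ((f + Finsupp.single s c) k).natAbs
      ≤ ∑ k ∈ T, ((f k).natAbs + if s = k then c.natAbs else 0) := by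
        refine Finset.sum_le_sum fun k _ => ?_
        rw [Finsupp.add_apply, Finsupp.single_apply]
        split_ifs with h
        · exact (Int.natAbs_add_le _ _)
        · simp
    _ = ∑ k ∈ T, (f k).natAbs + c.natAbs := by
        rw [Finset.sum_add_distrib]
        congr 1
        rw [Finset.sum_ite_eq T s (fun _ => c.natAbs), if_pos hsT]

lemma wt_sub_single_le (f : ℤ →₀ ℤ) (s c : ℤ) :
    wt (f - Finsupp.single s c) ≤ wt f + c.natAbs := by
  have := wt_add_single_le f s (-c)
  simpa [sub_eq_add_neg, Finsupp.single_neg] using this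

lemma wt_le_numA (w : List LampGen) : wt (lampEval w).1 ≤ numA w := by
  induction w using List.reverseRecOn with
  | nil => simp [lampEval, wt]
  | append_singleton w g ih =>
    rw [lampEval_eq, evalFrom_append, ← lampEval_eq]
    rcases hst : lampEval w with ⟨fw, sw⟩
    rw [hst] at ih
    have ih' : wt fw ≤ numA w := by simpa using ih
    cases g with
    | T => simpa [lampStep] using ih.trans (by simp)
    | Tinv => simpa [lampStep] using ih.trans (by simp)
    | A =>
      simp only [evalFrom_cons, evalFrom_nil, lampStep, numA_append]
      calc wt (fw + Finsupp.single sw 1) ≤ wt fw + 1 := wt_add_single_le fw sw 1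
        _ ≤ numA w + numA [LampGen.A] := by have h1 : numA [LampGen.A] = 1 := rfl; omega
    | Ainv =>
      simp only [evalFrom_cons, evalFrom_nil, lampStep, numA_append]
      calc wt (fw - Finsupp.single sw 1) ≤ wt fw + 1 := wt_sub_single_le fw sw 1
        _ ≤ numA w + numA [LampGen.Ainv] := by have h1 : numA [LampGen.Ainv] = 1 := rfl; omega

lemma travel_bound (w u1 u2 : List LampGen) (h1 : u1 <+: u2) (h2 : u2 <+: w)
    (hw : disp w = 0) :
    |disp u1| + |disp u2 - disp u1| + |disp u2| ≤ (numT w : ℤ) := by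
  obtain ⟨a, rfl⟩ := h1
  obtain ⟨b, rfl⟩ := h2
  simp only [disp_append, numT_append] at *
  have b1 := abs_disp_le_numT u1
  have b2 := abs_disp_le_numT a
  have b3 := abs_disp_le_numT b
  have e1 : disp u1 + disp a - disp u1 = disp a := by ring
  have e2 : |disp u1 + disp a| = |disp b| := by
    rw [show disp b = -(disp u1 + disp a) from by linarith, abs_neg]
  rw [e1, e2]
  push_cast
  linarith

lemma lower_bound (w : List LampGen) (f : ℤ →₀ ℤ) (hw : lampEval w = (f, 0)) :
    2 * (insert (0 : ℤ) f.support).max' (Finset.insert_nonempty _ _)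
      + 2 * (insert (0 : ℤ) (f.support.image (fun k => -k))).max' (Finset.insert_nonempty _ _)
      + (wt f : ℤ) ≤ (w.length : ℤ) := by
  set R := (insert (0 : ℤ) f.support).max' (Finset.insert_nonempty _ _) with hRdef
  set L := (insert (0 : ℤ) (f.support.image (fun k => -k))).max' (Finset.insert_nonempty _ _) with hLdef
  have hR0 : 0 ≤ R := Finset.le_max' _ 0 (Finset.mem_insert_self _ _)
  have hL0 : 0 ≤ L := Finset.le_max' _ 0 (Finset.mem_insert_self _ _)
  have hdw : disp w = 0 := by
    have := pos_evalFrom (0, 0) w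
    rw [← lampEval_eq, hw] at this
    simpa using this.symm
  -- a prefix realising position R
  have hRpre : ∃ u, u <+: w ∧ disp u = R := by
    have hmem := Finset.max'_mem _ (Finset.insert_nonempty (0:ℤ) f.support)
    rw [← hRdef, Finset.mem_insert] at hmem
    rcases hmem with h0 | hs
    · exact ⟨[], List.nil_prefix, by simp [h0]⟩
    · obtain ⟨u, hu, hu2⟩ := visited w R (by rw [hw]; exact Finsupp.mem_support_iff.mp hs)
      refine ⟨u, hu, ?_⟩
      have := pos_evalFrom (0, 0) u
      rw [← lampEval_eq, hu2] at this
      simpa using this.symm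
  -- a prefix realising position -L
  have hLpre : ∃ u, u <+: w ∧ disp u = -L := by
    have hmem := Finset.max'_mem _ (Finset.insert_nonempty (0:ℤ) (f.support.image (fun k => -k)))
    rw [← hLdef, Finset.mem_insert] at hmem
    rcases hmem with h0 | hs
    · exact ⟨[], List.nil_prefix, by simp [h0]⟩
    · rw [Finset.mem_image] at hs
      obtain ⟨k, hk, hkL⟩ := hs
      have hkk : k = -L := by omega
      obtain ⟨u, hu, hu2⟩ := visited w k (by rw [hw]; exact Finsupp.mem_support_iff.mp hk)
      refine ⟨u, hu, ?_⟩
      have := pos_evalFrom (0, 0) u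
      rw [← lampEval_eq, hu2, hkk] at this
      simpa using this.symm
  obtain ⟨uR, huR, hdR⟩ := hRpre
  obtain ⟨uL, huL, hdL⟩ := hLpre
  have habsR : |R| = R := abs_of_nonneg hR0
  have habsL : |(-L)| = L := by rw [abs_neg, abs_of_nonneg hL0]
  have key : 2 * R + 2 * L ≤ (numT w : ℤ) := by
    rcases List.prefix_or_prefix_of_prefix huR huL with hpre | hpre
    · have := travel_bound w uR uL hpre huL hdw
      rw [hdR, hdL, habsR, habsL] at this
      have hm : |(-L) - R| = L + R := by
        rw [abs_of_nonpos (by linarith)]; ring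
      rw [hm] at this; linarith
    · have := travel_bound w uL uR hpre huR hdw
      rw [hdR, hdL, habsR, habsL] at this
      have hm : |R - (-L)| = R + L := by
        rw [abs_of_nonneg (by linarith)]; ring
      rw [hm] at this; linarith
  have hA : (wt f : ℤ) ≤ (numA w : ℤ) := by
    have := wt_le_numA w
    rw [hw] at this
    exact_mod_cast this
  have hlen := numT_add_numA w
  have : ((numT w : ℤ)) + numA w = w.length := by exact_mod_cast hlen
  linarith

/-! ### Upper bound construction -/

noncomputable def tog (v : ℤ) : List LampGen :=
  List.replicate v.natAbs (if 0 ≤ v then .A else .Ainv)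

@[simp] lemma length_tog (v : ℤ) : (tog v).length = v.natAbs := by simp [tog]

lemma evalFrom_replicate_T (g : ℤ →₀ ℤ) (s : ℤ) (n : ℕ) :
    evalFrom (g, s) (List.replicate n .T) = (g, s + n) := by
  induction n generalizing s with
  | zero => simp
  | succ n ih =>
    rw [List.replicate_succ, evalFrom_cons]
    show evalFrom (g, s + 1) _ = _
    rw [ih]
    refine Prod.ext rfl ?_
    show s + 1 + n = s + ((n : ℤ) + 1)
    ring

lemma evalFrom_replicate_A (g : ℤ →₀ ℤ) (s : ℤ) (n : ℕ) :
    evalFrom (g, s) (List.replicate n .A) = (g + Finsupp.single s (n : ℤ), s) := by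
  induction n generalizing g with
  | zero => simp
  | succ n ih =>
    rw [List.replicate_succ, evalFrom_cons]
    show evalFrom (g + Finsupp.single s 1, s) _ = _
    rw [ih]
    refine Prod.ext ?_ rfl
    show g + Finsupp.single s 1 + Finsupp.single s (n : ℤ) = g + Finsupp.single s ((n + 1 : ℕ) : ℤ)
    rw [add_assoc, ← Finsupp.single_add]
    congr 1
    push_cast
    ring

lemma evalFrom_replicate_Ainv (g : ℤ →₀ ℤ) (s : ℤ) (n : ℕ) :
    evalFrom (g, s) (List.replicate n .Ainv) = (g - Finsupp.single s (n : ℤ), s) := by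
  induction n generalizing g with
  | zero => simp
  | succ n ih =>
    rw [List.replicate_succ, evalFrom_cons]
    show evalFrom (g - Finsupp.single s 1, s) _ = _
    rw [ih]
    refine Prod.ext ?_ rfl
    show g - Finsupp.single s 1 - Finsupp.single s (n : ℤ) = g - Finsupp.single s ((n + 1 : ℕ) : ℤ)
    rw [sub_sub, ← Finsupp.single_add]
    congr 2
    push_cast
    ring

lemma evalFrom_tog (g : ℤ →₀ ℤ) (s v : ℤ) :
    evalFrom (g, s) (tog v) = (g + Finsupp.single s v, s) := by
  unfold tog
  split_ifs with h
  · rw [evalFrom_replicate_A, Int.natAbs_of_nonneg h]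
  · rw [evalFrom_replicate_Ainv]
    have hv : ((v.natAbs : ℤ)) = -v := by omega
    rw [hv, Finsupp.single_neg, sub_neg_eq_add]

noncomputable def downFrom (f : ℤ →₀ ℤ) : ℕ → ℤ → List LampGen
  | 0, p => tog (f p)
  | n+1, p => tog (f p) ++ LampGen.Tinv :: downFrom f n (p-1)

lemma evalFrom_downFrom (f : ℤ →₀ ℤ) (n : ℕ) : ∀ (p : ℤ) (g : ℤ →₀ ℤ),
    evalFrom (g, p) (downFrom f n p) =
      (g + ∑ j ∈ Finset.range (n+1), Finsupp.single (p - j) (f (p - j)), p - n) := by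
  induction n with
  | zero =>
    intro p g
    show evalFrom (g, p) (tog (f p)) = _
    rw [evalFrom_tog]
    simp
  | succ n ih =>
    intro p g
    show evalFrom (g, p) (tog (f p) ++ LampGen.Tinv :: downFrom f n (p-1)) = _
    rw [evalFrom_append, evalFrom_tog, evalFrom_cons]
    show evalFrom (g + Finsupp.single p (f p), p - 1) (downFrom f n (p-1)) = _
    rw [ih]
    refine Prod.ext ?_ ?_
    · show g + Finsupp.single p (f p) + ∑ j ∈ Finset.range (n+1),
          Finsupp.single (p - 1 - (j : ℤ)) (f (p - 1 - (j : ℤ))) =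
        g + ∑ j ∈ Finset.range (n+1+1), Finsupp.single (p - (j : ℤ)) (f (p - (j : ℤ)))
      conv_rhs => rw [Finset.sum_range_succ']
      have hc : ∀ j ∈ Finset.range (n+1),
          Finsupp.single (p - ((j + 1 : ℕ) : ℤ)) (f (p - ((j + 1 : ℕ) : ℤ))) =
          Finsupp.single (p - 1 - (j : ℤ)) (f (p - 1 - (j : ℤ))) := by
        intro j _
        have h2 : (p - ((j + 1 : ℕ) : ℤ)) = p - 1 - (j : ℤ) := by push_cast; ring
        rw [h2]
      rw [Finset.sum_congr rfl hc]
      simp only [Nat.cast_zero, sub_zero]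
      abel
    · show p - 1 - (n : ℤ) = p - ((n + 1 : ℕ) : ℤ)
      push_cast
      ring

lemma length_downFrom (f : ℤ →₀ ℤ) (n : ℕ) : ∀ p : ℤ,
    (downFrom f n p).length = n + ∑ j ∈ Finset.range (n+1), (f (p - j)).natAbs := by
  induction n with
  | zero => intro p; simp [downFrom]
  | succ n ih =>
    intro p
    show (tog (f p) ++ LampGen.Tinv :: downFrom f n (p-1)).length = _
    conv_rhs => rw [Finset.sum_range_succ']
    have hc : ∀ j ∈ Finset.range (n+1),
        (f (p - ((j + 1 : ℕ) : ℤ))).natAbs = (f (p - 1 - (j : ℤ))).natAbs := by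
      intro j _
      have h2 : (p - ((j + 1 : ℕ) : ℤ)) = p - 1 - (j : ℤ) := by push_cast; ring
      rw [h2]
    rw [Finset.sum_congr rfl hc]
    simp [ih (p-1)]
    omega

lemma exists_word (f : ℤ →₀ ℤ) (r l : ℕ) (hr : ∀ k ∈ f.support, k ≤ (r : ℤ))
    (hl : ∀ k ∈ f.support, -(l : ℤ) ≤ k) :
    ∃ w : List LampGen, w.length = 2 * r + 2 * l + wt f ∧ lampEval w = (f, 0) := by
  set W : List LampGen :=
    List.replicate r .T ++ downFrom f (r + l) (r : ℤ) ++ List.replicate l .T with hW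
  have hinj : ∀ a ∈ Finset.range (r+l+1), ∀ b ∈ Finset.range (r+l+1),
      ((r : ℤ) - a) = ((r : ℤ) - b) → a = b := by
    intro a _ b _ h; omega
  have hsub : f.support ⊆ (Finset.range (r+l+1)).image (fun j : ℕ => (r : ℤ) - j) := by
    intro k hk
    rw [Finset.mem_image]
    refine ⟨((r : ℤ) - k).toNat, Finset.mem_range.mpr ?_, ?_⟩
    · have := hr k hk; have := hl k hk; omega
    · have := hr k hk; omega
  have hF : ∑ j ∈ Finset.range (r+l+1), Finsupp.single ((r : ℤ) - j) (f ((r : ℤ) - j)) = f := by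
    rw [← Finset.sum_image (g := fun j : ℕ => (r : ℤ) - j) (f := fun k => Finsupp.single k (f k)) hinj]
    rw [← Finset.sum_subset hsub (fun k _ hk => by
      simp [Finsupp.notMem_support_iff.mp hk])]
    exact Finsupp.sum_single f
  have hS : ∑ j ∈ Finset.range (r+l+1), (f ((r : ℤ) - j)).natAbs = wt f := by
    rw [← Finset.sum_image (g := fun j : ℕ => (r : ℤ) - j) (f := fun k => (f k).natAbs) hinj]
    rw [← Finset.sum_subset hsub (fun k _ hk => by
      simp [Finsupp.notMem_support_iff.mp hk])]
    rfl
  refine ⟨W, ?_, ?_⟩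
  · rw [hW]
    simp only [List.length_append, List.length_replicate, length_downFrom f (r+l) (r : ℤ), hS]
    omega
  · rw [lampEval_eq, hW, evalFrom_append, evalFrom_append,
      evalFrom_replicate_T 0 0 r, zero_add, evalFrom_downFrom f (r+l) (r : ℤ) 0,
      zero_add, hF, evalFrom_replicate_T f ((r : ℤ) - ((r + l : ℕ) : ℤ)) l]
    refine Prod.ext rfl ?_
    show (r : ℤ) - ((r + l : ℕ) : ℤ) + (l : ℤ) = 0
    push_cast
    ring

end LampAux

/-- the word length of a lamp configuration `f ∈ ⊕_ℤ ℤ` in `ℤ ≀ ℤ` equals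
`2 max({0} ∪ {k : f k ≠ 0}) + 2 max({0} ∪ {-k : f k ≠ 0}) + Σ_k |f k|`. -/
theorem stmt18 (f : ℤ →₀ ℤ) :
    (lampLength f : ℤ) =
      2 * (insert (0 : ℤ) f.support).max' (Finset.insert_nonempty _ _)
      + 2 * (insert (0 : ℤ) (f.support.image (fun k => -k))).max' (Finset.insert_nonempty _ _)
      + ∑ k ∈ f.support, |f k| := by
  open LampAux in
  set R := (insert (0 : ℤ) f.support).max' (Finset.insert_nonempty _ _) with hRdef
  set L := (insert (0 : ℤ) (f.support.image (fun k => -k))).max' (Finset.insert_nonempty _ _)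
    with hLdef
  have hR0 : 0 ≤ R := Finset.le_max' _ 0 (Finset.mem_insert_self _ _)
  have hL0 : 0 ≤ L := Finset.le_max' _ 0 (Finset.mem_insert_self _ _)
  have hr : ∀ k ∈ f.support, k ≤ (R.toNat : ℤ) := by
    intro k hk
    have := Finset.le_max' (insert (0 : ℤ) f.support) k (Finset.mem_insert_of_mem hk)
    omega
  have hl : ∀ k ∈ f.support, -(L.toNat : ℤ) ≤ k := by
    intro k hk
    have : -k ≤ L := Finset.le_max' _ (-k)
      (Finset.mem_insert_of_mem (Finset.mem_image_of_mem _ hk))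
    omega
  obtain ⟨w, hwlen, hweval⟩ := LampAux.exists_word f R.toNat L.toNat hr hl
  have hub : lampLength f ≤ 2 * R.toNat + 2 * L.toNat + LampAux.wt f :=
    Nat.sInf_le ⟨w, hwlen, hweval⟩
  have hne : {n : ℕ | ∃ w : List LampGen, w.length = n ∧ lampEval w = (f, 0)}.Nonempty :=
    ⟨_, w, hwlen, hweval⟩
  obtain ⟨w0, hw0len, hw0eval⟩ := Nat.sInf_mem hne
  have hlb := LampAux.lower_bound w0 f hw0eval
  rw [← hRdef, ← hLdef] at hlb
  have hw0len' : (w0.length : ℤ) = (lampLength f : ℤ) := by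
    exact_mod_cast congrArg (Nat.cast : ℕ → ℤ) hw0len
  rw [hw0len'] at hlb
  have hsum : ∑ k ∈ f.support, |f k| = ((LampAux.wt f : ℕ) : ℤ) := by
    rw [LampAux.wt]
    push_cast
    rfl
  rw [hsum]
  have hub' : (lampLength f : ℤ) ≤ 2 * R + 2 * L + ((LampAux.wt f : ℕ) : ℤ) := by
    have h2 : (lampLength f : ℤ) ≤ ((2 * R.toNat + 2 * L.toNat + LampAux.wt f : ℕ) : ℤ) := by
      exact_mod_cast hub
    push_cast at h2
    omega
  linarith
end
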